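/- arXiv:2202.08191 — 6 statements merged into one kernel-verified Lean document; each statement's English description precedes it below -/
import Mathlib

section
/- Let q, v : ℝ → ℝ be continuous, let λ ∈ ℝ, and let y₁, y₂ : ℝ → ℝ be twice continuously differentiable solutions on [0,1] of −y'' + q·y = λ·y with y₁(0) = 1, y₁'(0) = 0 and y₂(0) = 0, y₂'(0) = 1. Define w(x) = ∫₀ˣ y₂(t)·( y₁(t)·y₂(x) − y₁(x)·y₂(t) )·v(t) dt for x ∈ [0,1]. Then w is twice continuously differentiable on [0,1], w(0) = 0, w'(0) = 0, and w solves the inhomogeneous linearized equation −w''(x) + q(x)·w(x) − λ·w(x) = −v(x)·y₂(x) for all x ∈ [0,1]. -/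
/-- The function `w(x) = ∫₀ˣ y₂(t)·(y₁(t)·y₂(x) − y₁(x)·y₂(t))·v(t) dt` built from the
Pöschel–Trubowitz derivative kernel is twice continuously differentiable on `[0,1]`,
satisfies `w(0) = 0`, `w'(0) = 0`, and solves the inhomogeneous linearized equation
`-w'' + q·w - λ·w = -v·y₂` on `[0,1]`. -/
theorem kernel_integral_solves_linearized_equation
    (q v : ℝ → ℝ) (hq : Continuous q) (hv : Continuous v) (lam : ℝ) (y₁ y₂ : ℝ → ℝ)
    (hy₁ : ContDiffOn ℝ 2 y₁ (Set.Icc 0 1))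
    (hy₂ : ContDiffOn ℝ 2 y₂ (Set.Icc 0 1))
    (hode₁ : ∀ x ∈ Set.Icc (0:ℝ) 1,
      -(derivWithin (derivWithin y₁ (Set.Icc 0 1)) (Set.Icc 0 1) x) + q x * y₁ x = lam * y₁ x)
    (hode₂ : ∀ x ∈ Set.Icc (0:ℝ) 1,
      -(derivWithin (derivWithin y₂ (Set.Icc 0 1)) (Set.Icc 0 1) x) + q x * y₂ x = lam * y₂ x)
    (h₁0 : y₁ 0 = 1) (h₁0' : derivWithin y₁ (Set.Icc 0 1) 0 = 0)
    (h₂0 : y₂ 0 = 0) (h₂0' : derivWithin y₂ (Set.Icc 0 1) 0 = 1)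
    (w : ℝ → ℝ)
    (hw : ∀ x ∈ Set.Icc (0:ℝ) 1,
      w x = ∫ t in (0:ℝ)..x, y₂ t * (y₁ t * y₂ x - y₁ x * y₂ t) * v t) :
    ContDiffOn ℝ 2 w (Set.Icc 0 1) ∧
    w 0 = 0 ∧
    derivWithin w (Set.Icc 0 1) 0 = 0 ∧
    ∀ x ∈ Set.Icc (0:ℝ) 1,
      -(derivWithin (derivWithin w (Set.Icc 0 1)) (Set.Icc 0 1) x) + q x * w x - lam * w x
        = -(v x) * y₂ x := by
  have hs : UniqueDiffOn ℝ (Set.Icc (0:ℝ) 1) := uniqueDiffOn_Icc zero_lt_one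
  have h01 : (0:ℝ) ∈ Set.Icc (0:ℝ) 1 := ⟨le_refl 0, zero_le_one⟩
  -- clamp to [0,1]
  set c : ℝ → ℝ := fun t => min (max t 0) 1 with hc_def
  have hc_cont : Continuous c := (continuous_id.max continuous_const).min continuous_const
  have hc_mem : ∀ t, c t ∈ Set.Icc (0:ℝ) 1 :=
    fun t => ⟨le_min (le_max_right t 0) zero_le_one, min_le_right _ _⟩
  have hc_eq : ∀ t ∈ Set.Icc (0:ℝ) 1, c t = t := by
    intro t ht
    simp only [hc_def]
    rw [max_eq_left ht.1, min_eq_left ht.2]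
  have cy₁ : ContinuousOn y₁ (Set.Icc 0 1) := hy₁.continuousOn
  have cy₂ : ContinuousOn y₂ (Set.Icc 0 1) := hy₂.continuousOn
  set F : ℝ → ℝ := fun t => y₂ (c t) * y₁ (c t) * v t with hF_def
  set K : ℝ → ℝ := fun t => y₂ (c t) * y₂ (c t) * v t with hK_def
  have hY₁ : Continuous fun t => y₁ (c t) := cy₁.comp_continuous hc_cont hc_mem
  have hY₂ : Continuous fun t => y₂ (c t) := cy₂.comp_continuous hc_cont hc_mem
  have hF : Continuous F := (hY₂.mul hY₁).mul hv
  have hK : Continuous K := (hY₂.mul hY₂).mul hv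
  set G : ℝ → ℝ := fun x => ∫ t in (0:ℝ)..x, F t with hG_def
  set H : ℝ → ℝ := fun x => ∫ t in (0:ℝ)..x, K t with hH_def
  have hG : ∀ x, HasDerivAt G (F x) x := fun x => (hF.integral_hasStrictDerivAt 0 x).hasDerivAt
  have hH : ∀ x, HasDerivAt H (K x) x := fun x => (hK.integral_hasStrictDerivAt 0 x).hasDerivAt
  have hG0 : G 0 = 0 := intervalIntegral.integral_same
  have hH0 : H 0 = 0 := intervalIntegral.integral_same
  -- rewrite w
  have hwW : ∀ x ∈ Set.Icc (0:ℝ) 1, w x = y₂ x * G x - y₁ x * H x := by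
    intro x hx
    rw [hw x hx]
    have hsub : Set.uIcc (0:ℝ) x ⊆ Set.Icc 0 1 := by
      rw [Set.uIcc_of_le hx.1]
      exact Set.Icc_subset_Icc le_rfl hx.2
    have hcongr : ∀ t ∈ Set.uIcc (0:ℝ) x,
        y₂ t * (y₁ t * y₂ x - y₁ x * y₂ t) * v t = y₂ x * F t - y₁ x * K t := by
      intro t ht
      have hts := hsub ht
      simp only [hF_def, hK_def, hc_eq t hts]
      ring
    rw [intervalIntegral.integral_congr hcongr,
      intervalIntegral.integral_sub ((hF.intervalIntegrable 0 x).const_mul _)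
        ((hK.intervalIntegrable 0 x).const_mul _),
      intervalIntegral.integral_const_mul, intervalIntegral.integral_const_mul]
  -- derivatives of y₁, y₂
  have two_eq : (2 : WithTop ℕ∞) = 1 + 1 := by norm_num
  have hy₁s := (contDiffOn_succ_iff_derivWithin hs).1 (two_eq ▸ hy₁)
  have hy₂s := (contDiffOn_succ_iff_derivWithin hs).1 (two_eq ▸ hy₂)
  have hdy₁ : ∀ x ∈ Set.Icc (0:ℝ) 1,
      HasDerivWithinAt y₁ (derivWithin y₁ (Set.Icc 0 1) x) (Set.Icc 0 1) x :=
    fun x hx => (hy₁s.1 x hx).hasDerivWithinAt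
  have hdy₂ : ∀ x ∈ Set.Icc (0:ℝ) 1,
      HasDerivWithinAt y₂ (derivWithin y₂ (Set.Icc 0 1) x) (Set.Icc 0 1) x :=
    fun x hx => (hy₂s.1 x hx).hasDerivWithinAt
  have hdy₁' : ∀ x ∈ Set.Icc (0:ℝ) 1,
      HasDerivWithinAt (derivWithin y₁ (Set.Icc 0 1))
        (derivWithin (derivWithin y₁ (Set.Icc 0 1)) (Set.Icc 0 1) x) (Set.Icc 0 1) x :=
    fun x hx => ((hy₁s.2.2.differentiableOn one_ne_zero) x hx).hasDerivWithinAt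
  have hdy₂' : ∀ x ∈ Set.Icc (0:ℝ) 1,
      HasDerivWithinAt (derivWithin y₂ (Set.Icc 0 1))
        (derivWithin (derivWithin y₂ (Set.Icc 0 1)) (Set.Icc 0 1) x) (Set.Icc 0 1) x :=
    fun x hx => ((hy₂s.2.2.differentiableOn one_ne_zero) x hx).hasDerivWithinAt
  -- first derivative of w
  set w1 : ℝ → ℝ := fun x =>
    derivWithin y₂ (Set.Icc 0 1) x * G x - derivWithin y₁ (Set.Icc 0 1) x * H x with hw1_def
  have hw' : ∀ x ∈ Set.Icc (0:ℝ) 1, HasDerivWithinAt w (w1 x) (Set.Icc 0 1) x := by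
    intro x hx
    have key : HasDerivWithinAt (fun x => y₂ x * G x - y₁ x * H x)
        (derivWithin y₂ (Set.Icc 0 1) x * G x + y₂ x * F x -
          (derivWithin y₁ (Set.Icc 0 1) x * H x + y₁ x * K x)) (Set.Icc 0 1) x :=
      ((hdy₂ x hx).mul (hG x).hasDerivWithinAt).sub ((hdy₁ x hx).mul (hH x).hasDerivWithinAt)
    have heq : derivWithin y₂ (Set.Icc 0 1) x * G x + y₂ x * F x -
        (derivWithin y₁ (Set.Icc 0 1) x * H x + y₁ x * K x) = w1 x := by
      simp only [hw1_def, hF_def, hK_def, hc_eq x hx]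
      ring
    exact (heq ▸ key).congr (fun y hy => hwW y hy) (hwW x hx)
  have hderivw : ∀ x ∈ Set.Icc (0:ℝ) 1, derivWithin w (Set.Icc 0 1) x = w1 x :=
    fun x hx => (hw' x hx).derivWithin (hs x hx)
  -- second derivative of w
  have hw1' : ∀ x ∈ Set.Icc (0:ℝ) 1, HasDerivWithinAt w1
      (derivWithin (derivWithin y₂ (Set.Icc 0 1)) (Set.Icc 0 1) x * G x +
        derivWithin y₂ (Set.Icc 0 1) x * F x -
        (derivWithin (derivWithin y₁ (Set.Icc 0 1)) (Set.Icc 0 1) x * H x +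
          derivWithin y₁ (Set.Icc 0 1) x * K x)) (Set.Icc 0 1) x :=
    fun x hx =>
      ((hdy₂' x hx).mul (hG x).hasDerivWithinAt).sub ((hdy₁' x hx).mul (hH x).hasDerivWithinAt)
  have hsecond : ∀ x ∈ Set.Icc (0:ℝ) 1,
      derivWithin (derivWithin w (Set.Icc 0 1)) (Set.Icc 0 1) x =
        derivWithin (derivWithin y₂ (Set.Icc 0 1)) (Set.Icc 0 1) x * G x +
          derivWithin y₂ (Set.Icc 0 1) x * F x -
          (derivWithin (derivWithin y₁ (Set.Icc 0 1)) (Set.Icc 0 1) x * H x +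
            derivWithin y₁ (Set.Icc 0 1) x * K x) := by
    intro x hx
    rw [derivWithin_congr hderivw (hderivw x hx)]
    exact (hw1' x hx).derivWithin (hs x hx)
  -- Wronskian
  have hWr : ∀ x ∈ Set.Icc (0:ℝ) 1,
      y₁ x * derivWithin y₂ (Set.Icc 0 1) x - derivWithin y₁ (Set.Icc 0 1) x * y₂ x = 1 := by
    have hWd : ∀ x ∈ Set.Icc (0:ℝ) 1, HasDerivWithinAt
        (fun x => y₁ x * derivWithin y₂ (Set.Icc 0 1) x - derivWithin y₁ (Set.Icc 0 1) x * y₂ x)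
        0 (Set.Icc 0 1) x := by
      intro x hx
      have key := ((hdy₁ x hx).mul (hdy₂' x hx)).sub ((hdy₁' x hx).mul (hdy₂ x hx))
      have e₁ : derivWithin (derivWithin y₁ (Set.Icc 0 1)) (Set.Icc 0 1) x
          = q x * y₁ x - lam * y₁ x := by have := hode₁ x hx; linarith
      have e₂ : derivWithin (derivWithin y₂ (Set.Icc 0 1)) (Set.Icc 0 1) x
          = q x * y₂ x - lam * y₂ x := by have := hode₂ x hx; linarith
      refine key.congr_deriv ?_
      rw [e₁, e₂]; ring
    have hdiff : DifferentiableOn ℝ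
        (fun x => y₁ x * derivWithin y₂ (Set.Icc 0 1) x - derivWithin y₁ (Set.Icc 0 1) x * y₂ x)
        (Set.Icc 0 1) := fun x hx => (hWd x hx).differentiableWithinAt
    have hconst := constant_of_derivWithin_zero (a := (0:ℝ)) (b := 1) hdiff
      (fun x hx => (hWd x (Set.Ico_subset_Icc_self hx)).derivWithin
        (hs x (Set.Ico_subset_Icc_self hx)))
    intro x hx
    have := hconst x hx
    rw [this, h₁0, h₁0', h₂0, h₂0']
    ring
  refine ⟨?_, ?_, ?_, ?_⟩
  · -- C² regularity
    have hGc : ContDiff ℝ 1 G := by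
      rw [contDiff_one_iff_deriv]
      refine ⟨fun x => (hG x).differentiableAt, ?_⟩
      have : deriv G = F := funext fun x => (hG x).deriv
      rw [this]; exact hF
    have hHc : ContDiff ℝ 1 H := by
      rw [contDiff_one_iff_deriv]
      refine ⟨fun x => (hH x).differentiableAt, ?_⟩
      have : deriv H = K := funext fun x => (hH x).deriv
      rw [this]; exact hK
    have hw1c : ContDiffOn ℝ 1 w1 (Set.Icc 0 1) :=
      (hy₂s.2.2.mul hGc.contDiffOn).sub (hy₁s.2.2.mul hHc.contDiffOn)
    rw [two_eq, contDiffOn_succ_iff_derivWithin hs]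
    refine ⟨fun x hx => (hw' x hx).differentiableWithinAt, by simp, ?_⟩
    exact hw1c.congr hderivw
  · rw [hw 0 h01, intervalIntegral.integral_same]
  · rw [hderivw 0 h01]
    simp only [hw1_def, h₁0', h₂0', hG0, hH0]
    ring
  · intro x hx
    rw [hsecond x hx, hwW x hx]
    have e₁ : derivWithin (derivWithin y₁ (Set.Icc 0 1)) (Set.Icc 0 1) x
        = q x * y₁ x - lam * y₁ x := by have := hode₁ x hx; linarith
    have e₂ : derivWithin (derivWithin y₂ (Set.Icc 0 1)) (Set.Icc 0 1) x
        = q x * y₂ x - lam * y₂ x := by have := hode₂ x hx; linarith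
    rw [e₁, e₂]
    simp only [hF_def, hK_def, hc_eq x hx]
    linear_combination (-(v x * y₂ x)) * hWr x hx
end

section
/- Let q, v : ℝ → ℝ be continuous and λ ∈ ℝ. Let y₁ : ℝ → ℝ be a twice continuously differentiable solution on [0,1] of −y'' + q·y = λ·y with y₁(0) = 1, y₁'(0) = 0. Suppose u : ℝ × ℝ → ℝ is three times continuously differentiable and, for every ε ∈ ℝ and every x ∈ [0,1], satisfies −∂ₓₓu(ε,x) + (q(x) + ε·v(x))·u(ε,x) = λ·u(ε,x), together with u(ε,0) = 0 and ∂ₓu(ε,0) = 1. Then for every x ∈ [0,1], the directional derivative of the solution with respect to the potential is given by ∂_ε u(0,x) = ∫₀ˣ u(0,t)·( y₁(t)·u(0,x) − y₁(x)·u(0,t) )·v(t) dt. -/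
open Set MeasureTheory intervalIntegral

lemma PT_pair_identity
    (q v : ℝ → ℝ) (hv : Continuous v) (lam : ℝ)
    (u : ℝ × ℝ → ℝ) (hu : ContDiff ℝ 3 u)
    (h0 : ∀ ε : ℝ, u (ε, 0) = 0)
    (h0' : ∀ ε : ℝ, deriv (fun x' => u (ε, x')) 0 = 1)
    (ε : ℝ)
    (hodeε : ∀ x ∈ Set.Icc (0:ℝ) 1,
      -(deriv (deriv (fun x' => u (ε, x'))) x) + (q x + ε * v x) * u (ε, x) = lam * u (ε, x))
    (z z' z'' : ℝ → ℝ)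
    (hz : ∀ t ∈ Set.Icc (0:ℝ) 1, HasDerivWithinAt z (z' t) (Set.Icc 0 1) t)
    (hz' : ∀ t ∈ Set.Icc (0:ℝ) 1, HasDerivWithinAt z' (z'' t) (Set.Icc 0 1) t)
    (hzc : ContinuousOn z (Set.Icc 0 1)) (hz'c : ContinuousOn z' (Set.Icc 0 1))
    (hodez : ∀ t ∈ Set.Icc (0:ℝ) 1, -z'' t + q t * z t = lam * z t)
    (x : ℝ) (hx : x ∈ Set.Icc (0:ℝ) 1) :
    deriv (fun x' => u (ε, x')) x * z x - u (ε, x) * z' x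
      = z 0 + ε * ∫ t in (0:ℝ)..x, v t * u (ε, t) * z t := by
  have hU : ContDiff ℝ 3 (fun x' => u (ε, x')) :=
    hu.comp (contDiff_const.prodMk contDiff_id)
  have hU' : ContDiff ℝ (2+1) (fun x' => u (ε, x')) := hU
  have hUdiff : Differentiable ℝ (fun x' => u (ε, x')) := hU.differentiable (by norm_num)
  have hUd : ContDiff ℝ 2 (deriv (fun x' => u (ε, x'))) := (contDiff_succ_iff_deriv.mp hU').2.2
  have hUdd : Differentiable ℝ (deriv (fun x' => u (ε, x'))) := hUd.differentiable (by norm_num)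
  set U := fun x' => u (ε, x') with hUdef
  have hGd : ∀ t ∈ Set.Icc (0:ℝ) 1,
      HasDerivWithinAt (fun s => deriv U s * z s - U s * z' s)
        (ε * (v t * U t * z t)) (Set.Icc 0 1) t := by
    intro t ht
    have hA : HasDerivWithinAt (deriv U) (deriv (deriv U) t) (Set.Icc 0 1) t :=
      ((hUdd t).hasDerivAt).hasDerivWithinAt
    have hB : HasDerivWithinAt U (deriv U t) (Set.Icc 0 1) t :=
      ((hUdiff t).hasDerivAt).hasDerivWithinAt
    have h := (hA.mul (hz t ht)).sub (hB.mul (hz' t ht))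
    refine h.congr_deriv ?_
    have e1 := hodeε t ht
    have e2 := hodez t ht
    linear_combination -(z t) * e1 + (U t) * e2
  have hsub : Set.Icc (0:ℝ) x ⊆ Set.Icc 0 1 := Set.Icc_subset_Icc le_rfl hx.2
  have hcont : ContinuousOn (fun s => deriv U s * z s - U s * z' s) (Set.Icc 0 x) :=
    ((hUd.continuous.continuousOn.mul (hzc.mono hsub)).sub
      ((hU.continuous.continuousOn).mul (hz'c.mono hsub)))
  have hint : IntervalIntegrable (fun t => ε * (v t * U t * z t)) volume 0 x := by
    apply ContinuousOn.intervalIntegrable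
    rw [Set.uIcc_of_le hx.1]
    exact continuousOn_const.mul (((hv.mul hU.continuous).continuousOn).mul (hzc.mono hsub))
  have hFTC := intervalIntegral.integral_eq_sub_of_hasDeriv_right_of_le hx.1 hcont
      (fun t ht => (hGd t ⟨ht.1.le, (ht.2.trans_le hx.2).le⟩).mono_of_mem_nhdsWithin
        (mem_nhdsWithin_of_mem_nhds (Icc_mem_nhds ht.1 (ht.2.trans_le hx.2)))) hint
  have hmul : ∫ t in (0:ℝ)..x, ε * (v t * U t * z t)
      = ε * ∫ t in (0:ℝ)..x, v t * U t * z t := intervalIntegral.integral_const_mul _ _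
  rw [hmul] at hFTC
  have hU0 : U 0 = 0 := h0 ε
  have hdU0 : deriv U 0 = 1 := h0' ε
  rw [hU0, hdU0] at hFTC
  linarith [hFTC]

/-- **Pöschel–Trubowitz derivative formula.** If `u(ε, ·)` is, for each `ε`, the solution of
`-∂ₓₓu + (q + ε·v)·u = λ·u` on `[0,1]` with `u(ε,0) = 0`, `∂ₓu(ε,0) = 1`, and `y₁` is the
solution of `-y'' + q·y = λ·y` with `y₁(0) = 1`, `y₁'(0) = 0`, then for `x ∈ [0,1]`,
`∂_ε u(0,x) = ∫₀ˣ u(0,t)·(y₁(t)·u(0,x) − y₁(x)·u(0,t))·v(t) dt`. -/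
theorem derivative_formula_for_solution_wrt_potential
    (q v : ℝ → ℝ) (hq : Continuous q) (hv : Continuous v) (lam : ℝ)
    (y₁ : ℝ → ℝ)
    (hy₁ : ContDiffOn ℝ 2 y₁ (Set.Icc 0 1))
    (hode₁ : ∀ x ∈ Set.Icc (0:ℝ) 1,
      -(derivWithin (derivWithin y₁ (Set.Icc 0 1)) (Set.Icc 0 1) x) + q x * y₁ x = lam * y₁ x)
    (h₁0 : y₁ 0 = 1) (h₁0' : derivWithin y₁ (Set.Icc 0 1) 0 = 0)
    (u : ℝ × ℝ → ℝ) (hu : ContDiff ℝ 3 u)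
    (hode : ∀ ε : ℝ, ∀ x ∈ Set.Icc (0:ℝ) 1,
      -(deriv (deriv (fun x' => u (ε, x'))) x) + (q x + ε * v x) * u (ε, x) = lam * u (ε, x))
    (h0 : ∀ ε : ℝ, u (ε, 0) = 0)
    (h0' : ∀ ε : ℝ, deriv (fun x' => u (ε, x')) 0 = 1) :
    ∀ x ∈ Set.Icc (0:ℝ) 1,
      deriv (fun e => u (e, x)) 0
        = ∫ t in (0:ℝ)..x, u (0, t) * (y₁ t * u (0, x) - y₁ x * u (0, t)) * v t := by
  intro x hx
  have hsub : Set.Icc (0:ℝ) x ⊆ Set.Icc 0 1 := Set.Icc_subset_Icc le_rfl hx.2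
  have huD : UniqueDiffOn ℝ (Set.Icc (0:ℝ) 1) := uniqueDiffOn_Icc one_pos
  -- data for z = y₁
  set y' := derivWithin y₁ (Set.Icc (0:ℝ) 1) with hy'def
  set y'' := derivWithin y' (Set.Icc (0:ℝ) 1) with hy''def
  have hy₁d : DifferentiableOn ℝ y₁ (Set.Icc (0:ℝ) 1) := hy₁.differentiableOn (by norm_num)
  have hy'cd : ContDiffOn ℝ 1 y' (Set.Icc (0:ℝ) 1) := hy₁.derivWithin huD (by norm_num)
  have hy'd : DifferentiableOn ℝ y' (Set.Icc (0:ℝ) 1) := hy'cd.differentiableOn (by norm_num)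
  have hz1 : ∀ t ∈ Set.Icc (0:ℝ) 1, HasDerivWithinAt y₁ (y' t) (Set.Icc 0 1) t :=
    fun t ht => (hy₁d t ht).hasDerivWithinAt
  have hz1' : ∀ t ∈ Set.Icc (0:ℝ) 1, HasDerivWithinAt y' (y'' t) (Set.Icc 0 1) t :=
    fun t ht => (hy'd t ht).hasDerivWithinAt
  -- data for z = y₂ = u (0, ·)
  have hU0 : ContDiff ℝ 3 (fun x' => u (0, x')) := hu.comp (contDiff_const.prodMk contDiff_id)
  have hU0' : ContDiff ℝ (2+1) (fun x' => u (0, x')) := hU0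
  have hU0diff : Differentiable ℝ (fun x' => u (0, x')) := hU0.differentiable (by norm_num)
  have hU0d : ContDiff ℝ 2 (deriv (fun x' => u (0, x'))) := (contDiff_succ_iff_deriv.mp hU0').2.2
  have hU0dd : Differentiable ℝ (deriv (fun x' => u (0, x'))) := hU0d.differentiable (by norm_num)
  have hz2 : ∀ t ∈ Set.Icc (0:ℝ) 1,
      HasDerivWithinAt (fun x' => u (0, x')) (deriv (fun x' => u (0, x')) t) (Set.Icc 0 1) t :=
    fun t _ => ((hU0diff t).hasDerivAt).hasDerivWithinAt
  have hz2' : ∀ t ∈ Set.Icc (0:ℝ) 1,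
      HasDerivWithinAt (deriv (fun x' => u (0, x')))
        (deriv (deriv (fun x' => u (0, x'))) t) (Set.Icc 0 1) t :=
    fun t _ => ((hU0dd t).hasDerivAt).hasDerivWithinAt
  have hode2 : ∀ t ∈ Set.Icc (0:ℝ) 1,
      -(deriv (deriv (fun x' => u (0, x'))) t) + q t * u (0, t) = lam * u (0, t) := by
    intro t ht
    have h := hode 0 t ht
    simpa using h
  -- the three Wronskian identities
  have A : ∀ e : ℝ, deriv (fun x' => u (e, x')) x * y₁ x - u (e, x) * y' x
      = 1 + e * ∫ t in (0:ℝ)..x, v t * u (e, t) * y₁ t := by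
    intro e
    have := PT_pair_identity q v hv lam u hu h0 h0' e (hode e) y₁ y' y''
      hz1 hz1' hy₁.continuousOn hy'cd.continuousOn hode₁ x hx
    rwa [h₁0] at this
  have B : ∀ e : ℝ, deriv (fun x' => u (e, x')) x * u (0, x)
        - u (e, x) * deriv (fun x' => u (0, x')) x
      = e * ∫ t in (0:ℝ)..x, v t * u (e, t) * u (0, t) := by
    intro e
    have := PT_pair_identity q v hv lam u hu h0 h0' e (hode e)
      (fun x' => u (0, x')) (deriv (fun x' => u (0, x')))
      (deriv (deriv (fun x' => u (0, x'))))
      hz2 hz2' hU0.continuous.continuousOn hU0d.continuous.continuousOn hode2 x hx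
    simpa [h0 0] using this
  have W : deriv (fun x' => u (0, x')) x * y₁ x - u (0, x) * y' x = 1 := by
    have := A 0
    simpa using this
  -- continuous extension of y₁
  set Y : ℝ → ℝ := fun t => y₁ (max 0 (min 1 t)) with hYdef
  have hYmem : ∀ t : ℝ, max 0 (min 1 t) ∈ Set.Icc (0:ℝ) 1 :=
    fun t => ⟨le_max_left _ _, max_le zero_le_one (min_le_left _ _)⟩
  have hY : Continuous Y :=
    hy₁.continuousOn.comp_continuous
      (continuous_const.max (continuous_const.min continuous_id)) (fun t => hYmem t)
  have hYeq : ∀ t ∈ Set.Icc (0:ℝ) 1, Y t = y₁ t := by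
    intro t ht
    simp only [hYdef]
    rw [min_eq_right ht.2, max_eq_right ht.1]
  -- the parameter-dependent integral
  set F : ℝ → ℝ :=
    fun e => ∫ t in (0:ℝ)..x, u (e, t) * (Y t * u (0, x) - y₁ x * u (0, t)) * v t with hFdef
  have hFcont : Continuous F := by
    apply intervalIntegral.continuous_parametric_intervalIntegral_of_continuous'
    show Continuous fun p : ℝ × ℝ =>
      u (p.1, p.2) * (Y p.2 * u (0, x) - y₁ x * u (0, p.2)) * v p.2
    exact ((hu.continuous.comp (continuous_fst.prodMk continuous_snd)).mul
      (((hY.comp continuous_snd).mul continuous_const).sub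
        (continuous_const.mul
          (hu.continuous.comp (continuous_const.prodMk continuous_snd))))).mul
      (hv.comp continuous_snd)
  have hkey : ∀ e : ℝ, u (e, x) - u (0, x) = e * F e := by
    intro e
    have hI : u (0, x) * (∫ t in (0:ℝ)..x, v t * u (e, t) * y₁ t)
        - y₁ x * (∫ t in (0:ℝ)..x, v t * u (e, t) * u (0, t)) = F e := by
      have hUe : Continuous (fun t => u (e, t)) :=
        hu.continuous.comp (continuous_const.prodMk continuous_id)
      have int1 : IntervalIntegrable
          (fun t => u (0, x) * (v t * u (e, t) * y₁ t)) volume 0 x := by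
        apply ContinuousOn.intervalIntegrable
        rw [Set.uIcc_of_le hx.1]
        exact continuousOn_const.mul
          (((hv.mul hUe).continuousOn).mul (hy₁.continuousOn.mono hsub))
      have int2 : IntervalIntegrable
          (fun t => y₁ x * (v t * u (e, t) * u (0, t))) volume 0 x := by
        apply ContinuousOn.intervalIntegrable
        rw [Set.uIcc_of_le hx.1]
        exact continuousOn_const.mul
          (((hv.mul hUe).continuousOn).mul (hU0.continuous.continuousOn))
      rw [← intervalIntegral.integral_const_mul, ← intervalIntegral.integral_const_mul,
        ← intervalIntegral.integral_sub int1 int2]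
      apply intervalIntegral.integral_congr
      intro t ht
      rw [Set.uIcc_of_le hx.1] at ht
      have hYt : Y t = y₁ t := hYeq t (hsub ht)
      simp only [hYt]
      ring
    have Ae := A e
    have Be := B e
    linear_combination (u (0, x)) * Ae - y₁ x * Be - (u (e, x)) * W + e * hI
  have hF0 : HasDerivAt (fun e => u (e, x)) (F 0) 0 := by
    rw [hasDerivAt_iff_tendsto_slope]
    have heq : ∀ᶠ e in nhdsWithin (0:ℝ) {(0:ℝ)}ᶜ, F e = slope (fun e => u (e, x)) 0 e := by
      filter_upwards [self_mem_nhdsWithin] with e he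
      have he' : (e:ℝ) ≠ 0 := by simpa using he
      simp only [slope_def_field, sub_zero]
      rw [hkey e]
      exact (mul_div_cancel_left₀ _ he').symm
    exact Filter.Tendsto.congr' heq ((hFcont.tendsto 0).mono_left nhdsWithin_le_nhds)
  rw [hF0.deriv]
  apply intervalIntegral.integral_congr
  intro t ht
  rw [Set.uIcc_of_le hx.1] at ht
  have hYt : Y t = y₁ t := hYeq t (hsub ht)
  simp only [hYt]
end

section
/- Let λ ≥ 1, let q : ℝ → ℝ be continuous, and suppose y : ℝ → ℝ is twice continuously differentiable on [0,1] and satisfies −y''(x) + q(x)·y(x) = λ·y(x) for all x ∈ [0,1], with y(0) = 0 and y'(0) = 1. Then, writing Q = ∫₀¹ |q(t)| dt, one has |y(x)| ≤ (1/√λ)·exp(Q) for every x ∈ [0,1]. -/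
/-- For `λ ≥ 1`, the solution `y` of `-y'' + q·y = λ·y` on `[0,1]` with `y(0) = 0`,
`y'(0) = 1` satisfies `|y(x)| ≤ (1/√λ)·exp(Q)` for every `x ∈ [0,1]`, where
`Q = ∫₀¹ |q(t)| dt`. -/
theorem solution_sup_bound
    (lam : ℝ) (hlam : 1 ≤ lam)
    (q : ℝ → ℝ) (hq : Continuous q)
    (y : ℝ → ℝ)
    (hy : ContDiffOn ℝ 2 y (Set.Icc 0 1))
    (hode : ∀ x ∈ Set.Icc (0:ℝ) 1,
      -(derivWithin (derivWithin y (Set.Icc 0 1)) (Set.Icc 0 1) x) + q x * y x = lam * y x)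
    (h0 : y 0 = 0) (h0' : derivWithin y (Set.Icc 0 1) 0 = 1) :
    ∀ x ∈ Set.Icc (0:ℝ) 1,
      |y x| ≤ (1 / Real.sqrt lam) * Real.exp (∫ t in (0:ℝ)..1, |q t|) := by
  intro x hx
  set S : Set ℝ := Set.Icc 0 1 with hSdef
  have hUD : UniqueDiffOn ℝ S := uniqueDiffOn_Icc (by norm_num)
  set u : ℝ → ℝ := derivWithin y S with hudef
  have hyd : DifferentiableOn ℝ y S := hy.differentiableOn two_ne_zero
  have hucd : ContDiffOn ℝ 1 u S := hy.derivWithin hUD (le_refl 2)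
  have hud : DifferentiableOn ℝ u S := hucd.differentiableOn one_ne_zero
  have hu' : ∀ z ∈ S, HasDerivWithinAt u ((q z - lam) * y z) S z := by
    intro z hz
    have h1 := (hud z hz).hasDerivWithinAt
    have h2 : -(derivWithin u S z) + q z * y z = lam * y z := hode z hz
    have h3 : derivWithin u S z = (q z - lam) * y z := by nlinarith [h2]
    rwa [h3] at h1
  set E : ℝ → ℝ := fun t => lam * (y t)^2 + (u t)^2 with hEdef
  have hE' : ∀ z ∈ S, HasDerivWithinAt E (2 * q z * y z * u z) S z := by
    intro z hz
    have hy' := (hyd z hz).hasDerivWithinAt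
    have hu'z := hu' z hz
    have h := ((hy'.fun_pow 2).const_mul lam).fun_add (hu'z.fun_pow 2)
    refine h.congr_deriv ?_
    norm_num
    rw [← hudef]
    ring
  set G : ℝ → ℝ := fun t => ∫ s in (0:ℝ)..t, |q s| with hGdef
  have hqa : Continuous fun t => |q t| := hq.abs
  have hG' : ∀ z : ℝ, HasDerivAt G (|q z|) z := by
    intro z
    exact intervalIntegral.integral_hasDerivAt_right
      (hqa.intervalIntegrable 0 z)
      (hqa.stronglyMeasurableAtFilter _ _)
      hqa.continuousAt
  have hGc : Continuous G := (Differentiable.continuous (fun t => (hG' t).differentiableAt))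
  set F : ℝ → ℝ := fun t => E t * Real.exp (-G t) with hFdef
  have hF' : ∀ z ∈ S, HasDerivWithinAt F
      (2 * q z * y z * u z * Real.exp (-G z) + E z * (Real.exp (-G z) * (-|q z|))) S z := by
    intro z hz
    have hg : HasDerivWithinAt (fun t => Real.exp (-G t)) (Real.exp (-G z) * (-|q z|)) S z := by
      have := ((hG' z).hasDerivWithinAt (s := S)).neg.exp
      simpa using this
    exact (hE' z hz).mul hg
  have hDnonpos : ∀ z : ℝ,
      2 * q z * y z * u z * Real.exp (-G z) + E z * (Real.exp (-G z) * (-|q z|)) ≤ 0 := by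
    intro z
    have hexp : 0 < Real.exp (-G z) := Real.exp_pos _
    have key : 2 * q z * y z * u z ≤ |q z| * E z := by
      have h1 : (0:ℝ) ≤ (|q z| - q z) * (y z + u z)^2 :=
        mul_nonneg (by linarith [le_abs_self (q z)]) (sq_nonneg _)
      have h2 : (0:ℝ) ≤ (|q z| + q z) * (y z - u z)^2 :=
        mul_nonneg (by linarith [neg_abs_le (q z)]) (sq_nonneg _)
      have h3 : (0:ℝ) ≤ |q z| * (y z)^2 * (lam - 1) :=
        mul_nonneg (mul_nonneg (abs_nonneg _) (sq_nonneg _)) (by linarith)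
      simp only [hEdef]
      nlinarith [h1, h2, h3]
    have : (2 * q z * y z * u z - |q z| * E z) * Real.exp (-G z) ≤ 0 :=
      mul_nonpos_of_nonpos_of_nonneg (by linarith) hexp.le
    nlinarith [this]
  -- F is antitone on S
  have hEc : ContinuousOn E S :=
    (continuousOn_const.mul ((hy.continuousOn).pow 2)).add ((hucd.continuousOn).pow 2)
  have hFc : ContinuousOn F S := hEc.mul ((Real.continuous_exp.comp hGc.neg).continuousOn)
  have hmono : AntitoneOn F S := by
    apply antitoneOn_of_deriv_nonpos (convex_Icc 0 1) hFc
    · intro z hz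
      rw [interior_Icc] at hz
      have hmem : S ∈ nhds z := Icc_mem_nhds hz.1 hz.2
      exact ((hF' z (Set.mem_Icc.mpr ⟨hz.1.le, hz.2.le⟩)).hasDerivAt hmem).differentiableAt.differentiableWithinAt
    · intro z hz
      rw [interior_Icc] at hz
      have hmem : S ∈ nhds z := Icc_mem_nhds hz.1 hz.2
      have hd := (hF' z (Set.mem_Icc.mpr ⟨hz.1.le, hz.2.le⟩)).hasDerivAt hmem
      rw [hd.deriv]
      exact hDnonpos z
  have h0S : (0:ℝ) ∈ S := Set.mem_Icc.mpr ⟨le_rfl, zero_le_one⟩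
  have hFx : F x ≤ F 0 := hmono h0S hx hx.1
  have hG0 : G 0 = 0 := intervalIntegral.integral_same
  have hE0 : E 0 = 1 := by simp [hEdef, h0, ← hudef, h0']
  have hF0 : F 0 = 1 := by simp [hFdef, hE0, hG0]
  have hEx : E x ≤ Real.exp (G x) := by
    have h := hFx
    rw [hF0] at h
    have hexp : 0 < Real.exp (-G x) := Real.exp_pos _
    have : E x * Real.exp (-G x) * Real.exp (G x) ≤ Real.exp (G x) := by
      have := mul_le_mul_of_nonneg_right h (Real.exp_pos (G x)).le
      simpa using this
    rwa [mul_assoc, ← Real.exp_add, neg_add_cancel, Real.exp_zero, mul_one] at this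
  set Q : ℝ := ∫ t in (0:ℝ)..1, |q t| with hQdef
  have hGxQ : G x ≤ Q := by
    have hadd : (∫ s in (0:ℝ)..x, |q s|) + (∫ s in x..(1:ℝ), |q s|) = ∫ s in (0:ℝ)..(1:ℝ), |q s| :=
      intervalIntegral.integral_add_adjacent_intervals
        (hqa.intervalIntegrable 0 x) (hqa.intervalIntegrable x 1)
    have hnn : (0:ℝ) ≤ ∫ s in x..(1:ℝ), |q s| :=
      intervalIntegral.integral_nonneg hx.2 (fun t _ => abs_nonneg _)
    simp only [hGdef, hQdef]
    linarith [hadd, hnn]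
  have hExQ : E x ≤ Real.exp Q := le_trans hEx (Real.exp_le_exp.mpr hGxQ)
  -- final arithmetic
  have hs : Real.sqrt lam ^ 2 = lam := Real.sq_sqrt (by linarith)
  have hs1 : 1 ≤ Real.sqrt lam := by
    rw [show (1:ℝ) = Real.sqrt 1 by simp]
    exact Real.sqrt_le_sqrt hlam
  have hQnn : 0 ≤ Q := by
    simpa [hQdef] using intervalIntegral.integral_nonneg zero_le_one (fun t _ => abs_nonneg (q t))
  have hexpQ1 : 1 ≤ Real.exp Q := Real.one_le_exp hQnn
  have hyx2 : lam * (y x)^2 ≤ Real.exp Q := by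
    have : (u x)^2 ≥ 0 := sq_nonneg _
    simp only [hEdef] at hExQ
    linarith
  have habs : |y x| * Real.sqrt lam ≤ Real.exp Q := by
    have h1 : (|y x| * Real.sqrt lam)^2 ≤ Real.exp Q ^ 2 := by
      have : (|y x| * Real.sqrt lam)^2 = lam * (y x)^2 := by
        rw [mul_pow, hs, sq_abs]; ring
      rw [this]
      nlinarith [hyx2, hexpQ1]
    have h2 : 0 ≤ |y x| * Real.sqrt lam := mul_nonneg (abs_nonneg _) (by linarith)
    nlinarith [h1, h2, Real.exp_pos Q]
  rw [div_mul_eq_mul_div, one_mul, le_div_iff₀ (by linarith : (0:ℝ) < Real.sqrt lam)]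
  linarith [habs]
end

section
/- Let q : ℝ → ℝ be continuous and write Q = ∫₀¹ |q(t)| dt. Then for every λ ≥ 1 and every twice continuously differentiable function y : ℝ → ℝ satisfying −y''(x) + q(x)·y(x) = λ·y(x) for all x ∈ [0,1] with y(0) = 0 and y'(0) = 1, one has the eigenfunction asymptotic bound |y(x) − sin(√λ·x)/√λ| ≤ (Q·exp(Q))/λ for every x ∈ [0,1]. In other words, y₂(x, λ; q) = sin(√λ·x)/√λ + O(1/λ) uniformly in x ∈ [0,1]. -/
/-- **Eigenfunction asymptotics** `y₂(x, λ; q) = sin(√λ·x)/√λ + O(1/λ)`: for every `λ ≥ 1`,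
the solution `y` of `-y'' + q·y = λ·y` on `[0,1]` with `y(0) = 0`, `y'(0) = 1` satisfies
`|y(x) − sin(√λ·x)/√λ| ≤ Q·exp(Q)/λ` uniformly for `x ∈ [0,1]`, where `Q = ∫₀¹ |q(t)| dt`. -/
theorem eigenfunction_asymptotic_bound
    (q : ℝ → ℝ) (hq : Continuous q) :
    ∀ lam : ℝ, 1 ≤ lam →
    ∀ y : ℝ → ℝ, ContDiffOn ℝ 2 y (Set.Icc 0 1) →
    (∀ x ∈ Set.Icc (0:ℝ) 1,
      -(derivWithin (derivWithin y (Set.Icc 0 1)) (Set.Icc 0 1) x) + q x * y x = lam * y x) →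
    y 0 = 0 → derivWithin y (Set.Icc 0 1) 0 = 1 →
    ∀ x ∈ Set.Icc (0:ℝ) 1,
      |y x - Real.sin (Real.sqrt lam * x) / Real.sqrt lam|
        ≤ (∫ t in (0:ℝ)..1, |q t|) * Real.exp (∫ t in (0:ℝ)..1, |q t|) / lam := by
  intro lam hlam y hy hODE hy0 hy'0
  set I : Set ℝ := Set.Icc 0 1 with hIdef
  have hI : UniqueDiffOn ℝ I := uniqueDiffOn_Icc one_pos
  set μ : ℝ := Real.sqrt lam with hμdef
  have hμ1 : 1 ≤ μ := Real.one_le_sqrt.mpr hlam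
  have hμpos : 0 < μ := lt_of_lt_of_le one_pos hμ1
  have hμ0 : μ ≠ 0 := ne_of_gt hμpos
  have hμsq : μ ^ 2 = lam := Real.sq_sqrt (le_trans zero_le_one hlam)
  have hlam0 : (0:ℝ) < lam := lt_of_lt_of_le one_pos hlam
  -- clip to [0,1]
  set clip : ℝ → ℝ := fun t => max 0 (min t 1) with hclipdef
  have hclip_cont : Continuous clip := continuous_const.max (continuous_id.min continuous_const)
  have hclip_mem : ∀ t, clip t ∈ I := by
    intro t
    constructor
    · exact le_max_left _ _
    · simp only [hclipdef, max_le_iff]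
      exact ⟨zero_le_one, min_le_right _ _⟩
  have hclip_eq : ∀ t ∈ I, clip t = t := by
    intro t ht
    simp only [hclipdef]
    rw [min_eq_left ht.2, max_eq_right ht.1]
  set Y : ℝ → ℝ := fun t => y (clip t) with hYdef
  have hYcont : Continuous Y :=
    (hy.continuousOn).comp_continuous hclip_cont hclip_mem
  have hYeq : ∀ t ∈ I, Y t = y t := fun t ht => by simp only [hYdef, hclip_eq t ht]
  set g : ℝ → ℝ := fun t => q t * Y t with hgdef
  have hgcont : Continuous g := hq.mul hYcont
  have hgy : ∀ t ∈ I, g t = q t * y t := fun t ht => by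
    simp only [hgdef, hYeq t ht]
  -- the building blocks
  set A : ℝ → ℝ := fun x => ∫ t in (0:ℝ)..x, Real.cos (μ * t) * g t with hAdef
  set B : ℝ → ℝ := fun x => ∫ t in (0:ℝ)..x, Real.sin (μ * t) * g t with hBdef
  have hcosg : Continuous fun t => Real.cos (μ * t) * g t :=
    (Real.continuous_cos.comp (continuous_const.mul continuous_id)).mul hgcont
  have hsing : Continuous fun t => Real.sin (μ * t) * g t :=
    (Real.continuous_sin.comp (continuous_const.mul continuous_id)).mul hgcont
  have hA : ∀ x, HasDerivAt A (Real.cos (μ * x) * g x) x := fun x =>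
    (hcosg.integral_hasStrictDerivAt 0 x).hasDerivAt
  have hB : ∀ x, HasDerivAt B (Real.sin (μ * x) * g x) x := fun x =>
    (hsing.integral_hasStrictDerivAt 0 x).hasDerivAt
  have hsin : ∀ x, HasDerivAt (fun x => Real.sin (μ * x)) (μ * Real.cos (μ * x)) x := by
    intro x
    have h1 : HasDerivAt (fun x : ℝ => μ * x) μ x := by
      simpa using (hasDerivAt_id x).const_mul μ
    have h := (Real.hasDerivAt_sin (μ * x)).comp x h1
    rw [mul_comm] at h
    exact h
  have hcos : ∀ x, HasDerivAt (fun x => Real.cos (μ * x)) (-(μ * Real.sin (μ * x))) x := by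
    intro x
    have h1 : HasDerivAt (fun x : ℝ => μ * x) μ x := by
      simpa using (hasDerivAt_id x).const_mul μ
    have h := (Real.hasDerivAt_cos (μ * x)).comp x h1
    have heq : -Real.sin (μ * x) * μ = -(μ * Real.sin (μ * x)) := by ring
    rwa [heq] at h
  set s : ℝ → ℝ := fun x => Real.sin (μ * x) / μ with hsdef
  have hs : ∀ x, HasDerivAt s (Real.cos (μ * x)) x := by
    intro x
    have := (hsin x).div_const μ
    simpa [hsdef, mul_div_assoc, mul_div_cancel_left₀ _ hμ0] using this
  have hs1 : ∀ x, HasDerivAt (fun x => Real.cos (μ * x)) (-lam * s x) x := by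
    intro x
    have h := hcos x
    have heq : -(μ * Real.sin (μ * x)) = -lam * s x := by
      simp only [hsdef]
      rw [← hμsq]
      field_simp
    rwa [heq] at h
  set T : ℝ → ℝ := fun x => (Real.sin (μ * x) * A x - Real.cos (μ * x) * B x) / μ with hTdef
  set T1 : ℝ → ℝ := fun x => Real.cos (μ * x) * A x + Real.sin (μ * x) * B x with hT1def
  have hT : ∀ x, HasDerivAt T (T1 x) x := by
    intro x
    have h := (((hsin x).mul (hA x)).sub ((hcos x).mul (hB x))).div_const μ
    have heq : (μ * Real.cos (μ * x) * A x + Real.sin (μ * x) * (Real.cos (μ * x) * g x)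
        - (-(μ * Real.sin (μ * x)) * B x + Real.cos (μ * x) * (Real.sin (μ * x) * g x))) / μ
        = T1 x := by
      simp only [hT1def]
      field_simp
      ring
    rwa [heq] at h
  have hT1 : ∀ x, HasDerivAt T1 (-lam * T x + g x) x := by
    intro x
    have h := ((hcos x).mul (hA x)).add ((hsin x).mul (hB x))
    have heq : -(μ * Real.sin (μ * x)) * A x + Real.cos (μ * x) * (Real.cos (μ * x) * g x)
        + (μ * Real.cos (μ * x) * B x + Real.sin (μ * x) * (Real.sin (μ * x) * g x))
        = -lam * T x + g x := by
      have hpyth := Real.sin_sq_add_cos_sq (μ * x)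
      simp only [hTdef]
      rw [← hμsq]
      field_simp
      linear_combination q x * Y x * hpyth
    rwa [heq] at h
  -- derivatives of y within I
  set y1 : ℝ → ℝ := derivWithin y I with hy1def
  set y2 : ℝ → ℝ := derivWithin y1 I with hy2def
  have hy1 : ∀ x ∈ I, HasDerivWithinAt y (y1 x) I x := by
    intro x hx
    exact (hy.differentiableOn (by norm_num) x hx).hasDerivWithinAt
  have hy1c : ContDiffOn ℝ 1 y1 I := hy.derivWithin hI (by norm_num)
  have hy2 : ∀ x ∈ I, HasDerivWithinAt y1 (y2 x) I x := by
    intro x hx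
    exact (hy1c.differentiableOn (by norm_num) x hx).hasDerivWithinAt
  have hy2eq : ∀ x ∈ I, y2 x = q x * y x - lam * y x := by
    intro x hx
    have := hODE x hx
    simp only [hy2def, hy1def] at *
    linarith
  -- the error function
  set e : ℝ → ℝ := fun x => y x - s x - T x with hedef
  set e1 : ℝ → ℝ := fun x => y1 x - Real.cos (μ * x) - T1 x with he1def
  have he : ∀ x ∈ I, HasDerivWithinAt e (e1 x) I x := by
    intro x hx
    exact ((hy1 x hx).sub ((hs x).hasDerivWithinAt)).sub ((hT x).hasDerivWithinAt)
  have he1 : ∀ x ∈ I, HasDerivWithinAt e1 (-lam * e x) I x := by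
    intro x hx
    have h := ((hy2 x hx).sub ((hs1 x).hasDerivWithinAt)).sub ((hT1 x).hasDerivWithinAt)
    have heq : y2 x - -lam * s x - (-lam * T x + g x) = -lam * e x := by
      rw [hy2eq x hx, hgy x hx]
      simp only [hedef]
      ring
    rwa [heq] at h
  -- energy argument: e ≡ 0 on I
  set E : ℝ → ℝ := fun x => e1 x * e1 x + lam * (e x * e x) with hEdef
  have hE : ∀ x ∈ I, HasDerivWithinAt E 0 I x := by
    intro x hx
    have h := ((he1 x hx).mul (he1 x hx)).add (((he x hx).mul (he x hx)).const_mul lam)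
    have heq : -lam * e x * e1 x + e1 x * (-lam * e x) + lam * (e1 x * e x + e x * e1 x) = 0 := by
      ring
    rwa [heq] at h
  have hEconst : ∀ x ∈ I, E x = E 0 := by
    apply constant_of_derivWithin_zero
    · exact fun x hx => (hE x hx).differentiableWithinAt
    · intro x hx
      exact (hE x (Set.Ico_subset_Icc_self hx)).derivWithin (hI x (Set.Ico_subset_Icc_self hx))
  have hE0 : E 0 = 0 := by
    have hA0 : A 0 = 0 := intervalIntegral.integral_same
    have hB0 : B 0 = 0 := intervalIntegral.integral_same
    simp only [hEdef, he1def, hedef, hTdef, hT1def, hsdef]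
    rw [hy0, hy'0]
    simp [hA0, hB0]
  have he0 : ∀ x ∈ I, e x = 0 := by
    intro x hx
    have h := hEconst x hx
    rw [hE0] at h
    simp only [hEdef] at h
    nlinarith [sq_nonneg (e x), sq_nonneg (e1 x)]
  have hyx : ∀ x ∈ I, y x = s x + T x := by
    intro x hx
    have := he0 x hx
    simp only [hedef] at this
    linarith
  -- bound on T via the convolution form
  have hTint : ∀ x ∈ I, T x = ∫ t in (0:ℝ)..x, Real.sin (μ * (x - t)) * g t / μ := by
    intro x _
    have hrw : ∀ t : ℝ, Real.sin (μ * (x - t)) * g t / μ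
        = (Real.sin (μ * x) * (Real.cos (μ * t) * g t)
          - Real.cos (μ * x) * (Real.sin (μ * t) * g t)) / μ := by
      intro t
      have h2 : μ * (x - t) = μ * x - μ * t := by ring
      rw [h2, Real.sin_sub]
      ring
    calc T x = (Real.sin (μ * x) * A x - Real.cos (μ * x) * B x) / μ := rfl
      _ = ∫ t in (0:ℝ)..x, Real.sin (μ * (x - t)) * g t / μ := by
          simp only [hAdef, hBdef]
          rw [← intervalIntegral.integral_const_mul, ← intervalIntegral.integral_const_mul,
            ← intervalIntegral.integral_sub
              (f := fun t => Real.sin (μ * x) * (Real.cos (μ * t) * g t))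
              (g := fun t => Real.cos (μ * x) * (Real.sin (μ * t) * g t))
              ((continuous_const.mul hcosg).intervalIntegrable 0 x)
              ((continuous_const.mul hsing).intervalIntegrable 0 x),
            ← intervalIntegral.integral_div]
          exact intervalIntegral.integral_congr fun t _ => (hrw t).symm
  have habs_sin : ∀ z : ℝ, |Real.sin z| ≤ 1 := fun z =>
    abs_le.mpr ⟨Real.neg_one_le_sin z, Real.sin_le_one z⟩
  set φ : ℝ → ℝ := fun x => ∫ t in (0:ℝ)..x, |g t| with hφdef
  have hgabs : Continuous fun t => |g t| := hgcont.abs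
  have hqabs : Continuous fun t => |q t| := hq.abs
  have hTbound : ∀ x ∈ I, |T x| ≤ φ x / μ := by
    intro x hx
    rw [hTint x hx]
    have h1 : |∫ t in (0:ℝ)..x, Real.sin (μ * (x - t)) * g t / μ|
        ≤ ∫ t in (0:ℝ)..x, |Real.sin (μ * (x - t)) * g t / μ| :=
      intervalIntegral.abs_integral_le_integral_abs hx.1
    refine h1.trans ?_
    have h2 : φ x / μ = ∫ t in (0:ℝ)..x, |g t| / μ := by
      rw [intervalIntegral.integral_div]
    rw [h2]
    apply intervalIntegral.integral_mono_on hx.1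
    · exact (((Real.continuous_sin.comp
        (continuous_const.mul (continuous_const.sub continuous_id))).mul hgcont).div_const
        μ).abs.intervalIntegrable 0 x
    · exact (hgabs.div_const μ).intervalIntegrable 0 x
    · intro t _
      rw [abs_div, abs_mul, abs_of_pos hμpos]
      apply div_le_div_of_nonneg_right ?_ hμpos.le |>.trans_eq rfl
      calc |Real.sin (μ * (x - t))| * |g t| ≤ 1 * |g t| :=
            mul_le_mul_of_nonneg_right (habs_sin _) (abs_nonneg _)
        _ = |g t| := one_mul _
  -- Gronwall-type bound on y
  set R : ℝ → ℝ := fun x => ∫ t in (0:ℝ)..x, |q t| with hRdef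
  have hR : ∀ x, HasDerivAt R (|q x|) x := fun x =>
    (hqabs.integral_hasStrictDerivAt 0 x).hasDerivAt
  have hφ' : ∀ x, HasDerivAt φ (|g x|) x := fun x =>
    (hgabs.integral_hasStrictDerivAt 0 x).hasDerivAt
  have hφ0 : ∀ x ∈ I, 0 ≤ φ x := fun x hx =>
    intervalIntegral.integral_nonneg hx.1 fun t _ => abs_nonneg _
  have hR0 : ∀ x ∈ I, 0 ≤ R x := fun x hx =>
    intervalIntegral.integral_nonneg hx.1 fun t _ => abs_nonneg _
  have hybound : ∀ x ∈ I, |y x| ≤ (1 + φ x) / μ := by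
    intro x hx
    rw [hyx x hx]
    have h1 : |s x| ≤ 1 / μ := by
      simp only [hsdef]
      rw [abs_div, abs_of_pos hμpos]
      exact div_le_div_of_nonneg_right (habs_sin _) hμpos.le |>.trans_eq rfl
    calc |s x + T x| ≤ |s x| + |T x| := abs_add_le _ _
      _ ≤ 1 / μ + φ x / μ := add_le_add h1 (hTbound x hx)
      _ = (1 + φ x) / μ := by ring
  set ψ : ℝ → ℝ := fun x => (1 + φ x) * Real.exp (-(R x / μ)) with hψdef
  have hψ' : ∀ x, HasDerivAt ψ
      (|g x| * Real.exp (-(R x / μ)) + (1 + φ x) * (Real.exp (-(R x / μ)) * (-(|q x| / μ)))) x := by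
    intro x
    have h1 : HasDerivAt (fun x => 1 + φ x) (|g x|) x := (hφ' x).const_add 1
    have h2 : HasDerivAt (fun x => -(R x / μ)) (-(|q x| / μ)) x := ((hR x).div_const μ).neg
    exact h1.mul h2.exp
  have hψle : ∀ x ∈ I, ψ x ≤ 1 := by
    have hanti : AntitoneOn ψ I := by
      apply antitoneOn_of_deriv_nonpos (convex_Icc 0 1)
      · exact fun x _ => (hψ' x).continuousAt.continuousWithinAt
      · intro x _
        exact (hψ' x).differentiableAt.differentiableWithinAt
      · intro x hx
        have hxI : x ∈ I := by
          have h' : x ∈ Set.Ioo (0:ℝ) 1 := by rwa [interior_Icc] at hx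
          exact Set.mem_Icc_of_Ioo h'
        rw [(hψ' x).deriv]
        have hgb : |g x| ≤ |q x| * (1 + φ x) / μ := by
          rw [hgy x hxI, abs_mul]
          calc |q x| * |y x| ≤ |q x| * ((1 + φ x) / μ) :=
                mul_le_mul_of_nonneg_left (hybound x hxI) (abs_nonneg _)
            _ = |q x| * (1 + φ x) / μ := by ring
        have hexp : 0 < Real.exp (-(R x / μ)) := Real.exp_pos _
        have key := mul_le_mul_of_nonneg_right hgb hexp.le
        have hring : (1 + φ x) * (Real.exp (-(R x / μ)) * (-(|q x| / μ)))
            = -(|q x| * (1 + φ x) / μ * Real.exp (-(R x / μ))) := by ring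
        rw [hring]
        linarith [key]
    intro x hx
    have h := hanti (Set.left_mem_Icc.mpr zero_le_one) hx hx.1
    have hψ0 : ψ 0 = 1 := by
      have hφz : φ 0 = 0 := intervalIntegral.integral_same
      have hRz : R 0 = 0 := intervalIntegral.integral_same
      simp [hψdef, hφz, hRz]
    rwa [hψ0] at h
  have hφle : ∀ x ∈ I, 1 + φ x ≤ Real.exp (R x / μ) := by
    intro x hx
    have h := hψle x hx
    simp only [hψdef] at h
    rw [Real.exp_neg] at h
    have hp : (0:ℝ) < Real.exp (R x / μ) := Real.exp_pos _
    calc 1 + φ x = (1 + φ x) * (Real.exp (R x / μ))⁻¹ * Real.exp (R x / μ) := by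
          field_simp
      _ ≤ 1 * Real.exp (R x / μ) := mul_le_mul_of_nonneg_right h hp.le
      _ = Real.exp (R x / μ) := one_mul _
  have hRx : ∀ x ∈ I, R x ≤ R 1 := by
    intro x hx
    exact intervalIntegral.integral_mono_interval le_rfl hx.1 hx.2
      (Filter.Eventually.of_forall fun t => abs_nonneg _) (hqabs.intervalIntegrable 0 1)
  have hQ0 : 0 ≤ R 1 := hR0 1 (Set.right_mem_Icc.mpr zero_le_one)
  have hyexp : ∀ t ∈ I, |y t| ≤ Real.exp (R 1) / μ := by
    intro t ht
    have h1 : R t / μ ≤ R 1 := (div_le_self (hR0 t ht) hμ1).trans (hRx t ht)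
    calc |y t| ≤ (1 + φ t) / μ := hybound t ht
      _ ≤ Real.exp (R t / μ) / μ := div_le_div_of_nonneg_right (hφle t ht) hμpos.le |>.trans_eq rfl
      _ ≤ Real.exp (R 1) / μ :=
          div_le_div_of_nonneg_right (Real.exp_le_exp.mpr h1) hμpos.le |>.trans_eq rfl
  -- final bound
  intro x hx
  show |y x - Real.sin (μ * x) / μ| ≤ R 1 * Real.exp (R 1) / lam
  have hTx : y x - Real.sin (μ * x) / μ = T x := by
    rw [hyx x hx]
    simp only [hsdef]
    ring
  rw [hTx]
  refine (hTbound x hx).trans ?_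
  have hb : φ x ≤ R x * (Real.exp (R 1) / μ) := by
    have hmono : (∫ t in (0:ℝ)..x, |g t|) ≤ ∫ t in (0:ℝ)..x, |q t| * (Real.exp (R 1) / μ) := by
      apply intervalIntegral.integral_mono_on hx.1 (hgabs.intervalIntegrable 0 x)
        ((hqabs.mul continuous_const).intervalIntegrable 0 x)
      intro t ht
      have htI : t ∈ I := ⟨ht.1, ht.2.trans hx.2⟩
      rw [hgy t htI, abs_mul]
      exact mul_le_mul_of_nonneg_left (hyexp t htI) (abs_nonneg _)
    calc φ x ≤ ∫ t in (0:ℝ)..x, |q t| * (Real.exp (R 1) / μ) := hmono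
      _ = R x * (Real.exp (R 1) / μ) := intervalIntegral.integral_mul_const _ _
  have hμμ : μ * μ = lam := by nlinarith [hμsq]
  calc φ x / μ ≤ R x * (Real.exp (R 1) / μ) / μ :=
        div_le_div_of_nonneg_right hb hμpos.le |>.trans_eq rfl
    _ = R x * Real.exp (R 1) / (μ * μ) := by ring
    _ ≤ R 1 * Real.exp (R 1) / (μ * μ) := by
        apply div_le_div_of_nonneg_right ?_ (by positivity) |>.trans_eq rfl
        exact mul_le_mul_of_nonneg_right (hRx x hx) (Real.exp_pos _).le
    _ = R 1 * Real.exp (R 1) / lam := by rw [hμμ]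
end

section
/- Fix λ ∈ ℝ and B ≥ 0. There exists a constant C ≥ 0, depending only on λ and B, with the following property: for all continuous functions p, q : ℝ → ℝ with sup_{x∈[0,1]} |p(x)| ≤ B and sup_{x∈[0,1]} |q(x)| ≤ B, and all twice continuously differentiable functions y_p, y_q : ℝ → ℝ satisfying −y_p'' + p·y_p = λ·y_p and −y_q'' + q·y_q = λ·y_q on [0,1] with y_p(0) = y_q(0) = 0 and y_p'(0) = y_q'(0) = 1, one has |y_q(x) − y_p(x)| ≤ C·∫₀¹ |q(t) − p(t)| dt for every x ∈ [0,1]. -/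
open Set MeasureTheory intervalIntegral

/-- FTC on `[0,1]` for `derivWithin`. -/
lemma my_ftc {f : ℝ → ℝ} (hf : ContDiffOn ℝ 1 f (Set.Icc 0 1)) {x : ℝ}
    (hx : x ∈ Set.Icc (0:ℝ) 1) :
    f x - f 0 = ∫ t in (0:ℝ)..x, derivWithin f (Set.Icc 0 1) t := by
  obtain ⟨hx0, hx1⟩ := hx
  have hsub : Set.Icc (0:ℝ) x ⊆ Set.Icc 0 1 := Set.Icc_subset_Icc le_rfl hx1
  have hcont' : ContinuousOn (derivWithin f (Set.Icc 0 1)) (Set.Icc 0 1) :=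
    hf.continuousOn_derivWithin (uniqueDiffOn_Icc one_pos) le_rfl
  have h := intervalIntegral.integral_eq_sub_of_hasDeriv_right_of_le hx0
      (hf.continuousOn.mono hsub)
      (fun t ht => by
        have htI : t ∈ Set.Icc (0:ℝ) 1 := ⟨ht.1.le, (ht.2.trans_le hx1).le⟩
        have hd := ((hf.differentiableOn one_ne_zero) t htI).hasDerivWithinAt
        exact hd.mono_of_mem_nhdsWithin (mem_nhdsWithin_of_mem_nhds
          (Icc_mem_nhds ht.1 (ht.2.trans_le hx1))))
      (by
        have : ContinuousOn (derivWithin f (Set.Icc 0 1)) (Set.uIcc 0 x) := by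
          rw [Set.uIcc_of_le hx0]; exact hcont'.mono hsub
        exact this.intervalIntegrable)
  linarith [h]

/-- A Grönwall-type integral inequality on `[0,1]`. -/
lemma my_gronwall {u r : ℝ → ℝ} {K a : ℝ} (hu : Continuous u) (hr : Continuous r)
    (hK : 0 ≤ K) (ha : 0 ≤ a) (hr0 : ∀ t, 0 ≤ r t)
    (h : ∀ x ∈ Set.Icc (0:ℝ) 1, u x ≤ a + ∫ t in (0:ℝ)..x, (K * u t + r t)) :
    ∀ x ∈ Set.Icc (0:ℝ) 1, u x ≤ Real.exp K * (a + ∫ t in (0:ℝ)..1, r t) := by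
  set G : ℝ → ℝ := fun t => K * u t + r t with hGdef
  have hG : Continuous G := by continuity
  set V : ℝ → ℝ := fun x => a + ∫ t in (0:ℝ)..x, G t with hVdef
  set R : ℝ → ℝ := fun x => ∫ t in (0:ℝ)..x, r t with hRdef
  have hV : ∀ x, HasDerivAt V (G x) x := fun x =>
    ((hG.integral_hasStrictDerivAt 0 x).hasDerivAt).const_add a
  have hR : ∀ x, HasDerivAt R (r x) x := fun x =>
    (hr.integral_hasStrictDerivAt 0 x).hasDerivAt
  set ψ : ℝ → ℝ := fun x => Real.exp (-K * x) * V x - R x with hψdef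
  have hψ : ∀ x, HasDerivAt ψ
      ((Real.exp (-K * x) * (-K)) * V x + Real.exp (-K * x) * G x - r x) x := by
    intro x
    have h1 : HasDerivAt (fun y => Real.exp (-K * y)) (Real.exp (-K * x) * (-K)) x := by
      have := ((hasDerivAt_id x).const_mul (-K)).exp
      simpa [mul_comm] using this
    exact (h1.mul (hV x)).sub (hR x)
  have hRmono : ∀ x ∈ Set.Icc (0:ℝ) 1, R x ≤ R 1 := by
    intro x hx
    have h1 : IntervalIntegrable r volume 0 x := hr.intervalIntegrable _ _
    have h2 : IntervalIntegrable r volume x 1 := hr.intervalIntegrable _ _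
    have hadd := intervalIntegral.integral_add_adjacent_intervals h1 h2
    have hnn : 0 ≤ ∫ t in x..(1:ℝ), r t :=
      intervalIntegral.integral_nonneg hx.2 (fun t _ => hr0 t)
    simp only [hRdef]; rw [← hadd]; linarith
  have hRnn : ∀ x ∈ Set.Icc (0:ℝ) 1, 0 ≤ R x := fun x hx =>
    intervalIntegral.integral_nonneg hx.1 (fun t _ => hr0 t)
  have hanti : AntitoneOn ψ (Set.Icc 0 1) := by
    apply antitoneOn_of_deriv_nonpos (convex_Icc 0 1)
    · exact fun x _ => ((hψ x).differentiableAt.continuousAt).continuousWithinAt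
    · intro x hx
      exact ((hψ x).differentiableAt).differentiableWithinAt
    · intro x hx
      rw [interior_Icc] at hx
      rw [(hψ x).deriv]
      have hxI : x ∈ Set.Icc (0:ℝ) 1 := ⟨hx.1.le, hx.2.le⟩
      have huV : u x ≤ V x := h x hxI
      have he1 : Real.exp (-K * x) ≤ 1 := by
        rw [show (1:ℝ) = Real.exp 0 by simp]
        exact Real.exp_le_exp.mpr (by nlinarith [hx.1.le])
      have he0 : 0 < Real.exp (-K * x) := Real.exp_pos _
      have hGb : G x - K * V x ≤ r x := by
        simp only [hGdef]; nlinarith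
      nlinarith [hr0 x, mul_le_mul_of_nonneg_left hGb he0.le]
  intro x hx
  have hψx : ψ x ≤ ψ 0 := hanti (Set.left_mem_Icc.mpr one_pos.le) hx hx.1
  have he0 : 0 < Real.exp (-K * x) := Real.exp_pos _
  have hVx : Real.exp (-K * x) * V x ≤ a + R x := by
    have h0 : Real.exp (-K * x) * V x - R x ≤ a := by simpa [hψdef, hVdef, hRdef] using hψx
    linarith
  have huV : u x ≤ V x := h x hx
  have hRb : R x ≤ R 1 := hRmono x hx
  have heK : Real.exp (-K * x) * Real.exp K ≥ 1 := by
    rw [← Real.exp_add]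
    rw [show (1:ℝ) = Real.exp 0 by simp]
    exact Real.exp_le_exp.mpr (by nlinarith [hx.2])
  have hRnx : 0 ≤ R x := hRnn x hx
  have hconc : u x ≤ Real.exp K * (a + R x) := by
    nlinarith [Real.exp_pos K]
  have : Real.exp K * (a + R x) ≤ Real.exp K * (a + R 1) := by
    have := Real.exp_pos K; nlinarith
  simpa [hRdef] using hconc.trans this

/-- Key a priori estimate for `y'' = F` with `|F| ≤ Kc(|y|+|y'|) + r`. -/
lemma schro_aux {y F r : ℝ → ℝ} {Kc a : ℝ}
    (hy : ContDiffOn ℝ 2 y (Set.Icc 0 1))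
    (hF : ∀ t ∈ Set.Icc (0:ℝ) 1,
      derivWithin (derivWithin y (Set.Icc 0 1)) (Set.Icc 0 1) t = F t)
    (hFbd : ∀ t ∈ Set.Icc (0:ℝ) 1,
      |F t| ≤ Kc * (|y t| + |derivWithin y (Set.Icc 0 1) t|) + r t)
    (hr : Continuous r) (hr0 : ∀ t, 0 ≤ r t) (hKc : 1 ≤ Kc)
    (hy0 : |y 0| + |derivWithin y (Set.Icc 0 1) 0| ≤ a) (ha : 0 ≤ a) :
    ∀ x ∈ Set.Icc (0:ℝ) 1,
      |y x| + |derivWithin y (Set.Icc 0 1) x| ≤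
        Real.exp (2 * Kc) * (a + ∫ t in (0:ℝ)..1, r t) := by
  have uD : UniqueDiffOn ℝ (Set.Icc (0:ℝ) 1) := uniqueDiffOn_Icc one_pos
  set y1 : ℝ → ℝ := derivWithin y (Set.Icc 0 1) with hy1def
  set y2 : ℝ → ℝ := derivWithin y1 (Set.Icc 0 1) with hy2def
  have hycd1 : ContDiffOn ℝ 1 y (Set.Icc 0 1) := hy.of_le (by norm_num)
  have hy1cd : ContDiffOn ℝ 1 y1 (Set.Icc 0 1) := hy.derivWithin uD (by norm_num)
  have hy2cont : ContinuousOn y2 (Set.Icc 0 1) := hy1cd.continuousOn_derivWithin uD le_rfl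
  -- clamp
  set c : ℝ → ℝ := fun x => max 0 (min x 1) with hcdef
  have hc : Continuous c := continuous_const.max (continuous_id.min continuous_const)
  have hcmem : ∀ x, c x ∈ Set.Icc (0:ℝ) 1 := fun x =>
    ⟨le_max_left _ _, max_le zero_le_one (min_le_right x 1)⟩
  have hceq : ∀ x ∈ Set.Icc (0:ℝ) 1, c x = x := by
    intro x hx; simp only [hcdef]; rw [min_eq_left hx.2, max_eq_right hx.1]
  set u : ℝ → ℝ := fun x => |y (c x)| + |y1 (c x)| with hudef
  have hu : Continuous u :=
    ((hycd1.continuousOn.comp_continuous hc hcmem).abs).add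
      ((hy1cd.continuousOn.comp_continuous hc hcmem).abs)
  have hu_eq : ∀ x ∈ Set.Icc (0:ℝ) 1, u x = |y x| + |y1 x| := by
    intro x hx; simp only [hudef, hceq x hx]
  have hu_nn : ∀ x, 0 ≤ u x := fun x => add_nonneg (abs_nonneg _) (abs_nonneg _)
  have key : ∀ x ∈ Set.Icc (0:ℝ) 1, u x ≤ a + ∫ t in (0:ℝ)..x, (2 * Kc * u t + r t) := by
    intro x hx
    have hsub : Set.Icc (0:ℝ) x ⊆ Set.Icc 0 1 := Set.Icc_subset_Icc le_rfl hx.2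
    have huIcc : Set.uIcc (0:ℝ) x = Set.Icc 0 x := Set.uIcc_of_le hx.1
    have hI1 : y x - y 0 = ∫ t in (0:ℝ)..x, y1 t := my_ftc hycd1 hx
    have hI2 : y1 x - y1 0 = ∫ t in (0:ℝ)..x, y2 t := my_ftc hy1cd hx
    have hint1 : IntervalIntegrable (fun t => |y1 t|) volume 0 x := by
      apply ContinuousOn.intervalIntegrable; rw [huIcc]
      exact ((hy1cd.continuousOn).mono hsub).abs
    have hint2 : IntervalIntegrable (fun t => |y2 t|) volume 0 x := by
      apply ContinuousOn.intervalIntegrable; rw [huIcc]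
      exact (hy2cont.mono hsub).abs
    have hintr : IntervalIntegrable (fun t => 2 * Kc * u t + r t) volume 0 x :=
      (((continuous_const.mul hu).add hr).intervalIntegrable 0 x)
    have hb1 : |∫ t in (0:ℝ)..x, y1 t| ≤ ∫ t in (0:ℝ)..x, |y1 t| :=
      intervalIntegral.abs_integral_le_integral_abs hx.1
    have hb2 : |∫ t in (0:ℝ)..x, y2 t| ≤ ∫ t in (0:ℝ)..x, |y2 t| :=
      intervalIntegral.abs_integral_le_integral_abs hx.1
    have hsum : (∫ t in (0:ℝ)..x, |y1 t|) + (∫ t in (0:ℝ)..x, |y2 t|)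
        = ∫ t in (0:ℝ)..x, (|y1 t| + |y2 t|) :=
      (intervalIntegral.integral_add hint1 hint2).symm
    have hmono : (∫ t in (0:ℝ)..x, (|y1 t| + |y2 t|))
        ≤ ∫ t in (0:ℝ)..x, (2 * Kc * u t + r t) := by
      apply intervalIntegral.integral_mono_on hx.1 (hint1.add hint2) hintr
      intro t ht
      have htI := hsub ht
      have h2 : y2 t = F t := hF t htI
      have h3 := hFbd t htI
      have h4 := hu_eq t htI
      have h5 := hu_nn t
      have h6 : |y1 t| ≤ u t := by rw [h4]; nlinarith [abs_nonneg (y t)]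
      rw [h2]
      nlinarith
    have := abs_sub_abs_le_abs_sub (y x) (y 0)
    have := abs_sub_abs_le_abs_sub (y1 x) (y1 0)
    rw [hu_eq x hx]
    have e1 : |y x| ≤ |y 0| + ∫ t in (0:ℝ)..x, |y1 t| := by
      rw [show y x = y 0 + ∫ t in (0:ℝ)..x, y1 t by linarith]
      calc |y 0 + ∫ t in (0:ℝ)..x, y1 t| ≤ |y 0| + |∫ t in (0:ℝ)..x, y1 t| := abs_add_le _ _
        _ ≤ _ := by linarith
    have e2 : |y1 x| ≤ |y1 0| + ∫ t in (0:ℝ)..x, |y2 t| := by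
      rw [show y1 x = y1 0 + ∫ t in (0:ℝ)..x, y2 t by linarith]
      calc |y1 0 + ∫ t in (0:ℝ)..x, y2 t| ≤ |y1 0| + |∫ t in (0:ℝ)..x, y2 t| := abs_add_le _ _
        _ ≤ _ := by linarith
    linarith
  have hgr := my_gronwall hu hr (by linarith) ha hr0 key
  intro x hx
  have := hgr x hx
  rw [hu_eq x hx] at this
  exact this


/-- **Lipschitz dependence of the solution on the potential.** Fix `λ ∈ ℝ` and `B ≥ 0`.
There exists `C ≥ 0`, depending only on `λ` and `B`, such that for all continuous
potentials `p, q` bounded by `B` on `[0,1]` and corresponding solutions `y_p, y_q` of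
`-y'' + p·y = λ·y`, `-y'' + q·y = λ·y` with initial data `(0,1)`, one has
`|y_q(x) − y_p(x)| ≤ C·∫₀¹ |q(t) − p(t)| dt` for all `x ∈ [0,1]`. -/
theorem lipschitz_dependence_on_potential
    (lam B : ℝ) (hB : 0 ≤ B) :
    ∃ C : ℝ, 0 ≤ C ∧
      ∀ p q : ℝ → ℝ, Continuous p → Continuous q →
        (∀ x ∈ Set.Icc (0:ℝ) 1, |p x| ≤ B) → (∀ x ∈ Set.Icc (0:ℝ) 1, |q x| ≤ B) →
      ∀ yp yq : ℝ → ℝ,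
        ContDiffOn ℝ 2 yp (Set.Icc 0 1) → ContDiffOn ℝ 2 yq (Set.Icc 0 1) →
        (∀ x ∈ Set.Icc (0:ℝ) 1,
          -(derivWithin (derivWithin yp (Set.Icc 0 1)) (Set.Icc 0 1) x) + p x * yp x
            = lam * yp x) →
        (∀ x ∈ Set.Icc (0:ℝ) 1,
          -(derivWithin (derivWithin yq (Set.Icc 0 1)) (Set.Icc 0 1) x) + q x * yq x
            = lam * yq x) →
        yp 0 = 0 → yq 0 = 0 →
        derivWithin yp (Set.Icc 0 1) 0 = 1 → derivWithin yq (Set.Icc 0 1) 0 = 1 →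
        ∀ x ∈ Set.Icc (0:ℝ) 1,
          |yq x - yp x| ≤ C * ∫ t in (0:ℝ)..1, |q t - p t| := by
  have uD : UniqueDiffOn ℝ (Set.Icc (0:ℝ) 1) := uniqueDiffOn_Icc one_pos
  set Kc : ℝ := 1 + |lam| + B with hKcdef
  have hKc : 1 ≤ Kc := by nlinarith [abs_nonneg lam]
  set M : ℝ := Real.exp (2 * Kc) with hMdef
  have hM1 : 1 ≤ M := by
    rw [hMdef, show (1:ℝ) = Real.exp 0 by simp]
    exact Real.exp_le_exp.mpr (by nlinarith)
  refine ⟨M * M, by nlinarith, ?_⟩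
  intro p q hp hq hpB hqB yp yq hcdp hcdq hODEp hODEq hyp0 hyq0 hyp'0 hyq'0
  -- bound on |yq| via schro_aux with zero forcing
  have hMq : ∀ x ∈ Set.Icc (0:ℝ) 1, |yq x| ≤ M := by
    have h0 : ∀ x ∈ Set.Icc (0:ℝ) 1,
        |yq x| + |derivWithin yq (Set.Icc 0 1) x| ≤
          Real.exp (2 * Kc) * (1 + ∫ t in (0:ℝ)..1, (0:ℝ)) := by
      apply schro_aux (F := fun t => (q t - lam) * yq t) (r := fun _ => (0:ℝ)) hcdq
      · intro t ht
        linear_combination - hODEq t ht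
      · intro t ht
        have h1 : |(q t - lam) * yq t| = |q t - lam| * |yq t| := abs_mul _ _
        have h2 : |q t - lam| ≤ |q t| + |lam| := abs_sub _ _
        have h3 := hqB t ht
        have h4 := abs_nonneg (yq t)
        have h5 := abs_nonneg (derivWithin yq (Set.Icc 0 1) t)
        have h6 := abs_nonneg (q t - lam)
        nlinarith
      · exact continuous_const
      · exact fun t => le_rfl
      · exact hKc
      · rw [hyq0, hyq'0]; norm_num
      · norm_num
    intro x hx
    have := h0 x hx
    simp only [intervalIntegral.integral_const, smul_eq_mul, mul_zero, add_zero, mul_one] at this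
    have h7 := abs_nonneg (derivWithin yq (Set.Icc 0 1) x)
    rw [hMdef]; linarith
  -- the difference
  set w : ℝ → ℝ := fun x => yq x - yp x with hwdef
  have hcdw : ContDiffOn ℝ 2 w (Set.Icc 0 1) := hcdq.sub hcdp
  have hdiffq : DifferentiableOn ℝ yq (Set.Icc 0 1) := hcdq.differentiableOn (by norm_num)
  have hdiffp : DifferentiableOn ℝ yp (Set.Icc 0 1) := hcdp.differentiableOn (by norm_num)
  have hw1 : ∀ t ∈ Set.Icc (0:ℝ) 1, derivWithin w (Set.Icc 0 1) t =
      derivWithin yq (Set.Icc 0 1) t - derivWithin yp (Set.Icc 0 1) t := by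
    intro t ht
    exact derivWithin_sub (hdiffq t ht) (hdiffp t ht)
  have hq1cd : ContDiffOn ℝ 1 (derivWithin yq (Set.Icc 0 1)) (Set.Icc 0 1) :=
    hcdq.derivWithin uD (by norm_num)
  have hp1cd : ContDiffOn ℝ 1 (derivWithin yp (Set.Icc 0 1)) (Set.Icc 0 1) :=
    hcdp.derivWithin uD (by norm_num)
  have hw2 : ∀ t ∈ Set.Icc (0:ℝ) 1,
      derivWithin (derivWithin w (Set.Icc 0 1)) (Set.Icc 0 1) t =
      derivWithin (derivWithin yq (Set.Icc 0 1)) (Set.Icc 0 1) t -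
      derivWithin (derivWithin yp (Set.Icc 0 1)) (Set.Icc 0 1) t := by
    intro t ht
    rw [derivWithin_congr hw1 (hw1 t ht)]
    exact derivWithin_sub ((hq1cd.differentiableOn one_ne_zero) t ht)
      ((hp1cd.differentiableOn one_ne_zero) t ht)
  have hw0 : |w 0| + |derivWithin w (Set.Icc 0 1) 0| ≤ 0 := by
    have h0 : (0:ℝ) ∈ Set.Icc (0:ℝ) 1 := Set.left_mem_Icc.mpr one_pos.le
    rw [hw1 0 h0, hyq'0, hyp'0]
    simp [hwdef, hyq0, hyp0]
  have hwb : ∀ x ∈ Set.Icc (0:ℝ) 1,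
      |w x| + |derivWithin w (Set.Icc 0 1) x| ≤
        Real.exp (2 * Kc) * (0 + ∫ t in (0:ℝ)..1, M * |q t - p t|) := by
    apply schro_aux (F := fun t => (p t - lam) * w t + (q t - p t) * yq t)
      (r := fun t => M * |q t - p t|) hcdw
    · intro t ht
      linear_combination hw2 t ht - hODEq t ht + hODEp t ht
    · intro t ht
      have h1 : |(p t - lam) * w t + (q t - p t) * yq t| ≤
          |p t - lam| * |w t| + |q t - p t| * |yq t| := by
        calc _ ≤ |(p t - lam) * w t| + |(q t - p t) * yq t| := abs_add_le _ _
          _ = _ := by rw [abs_mul, abs_mul]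
      have h2 : |p t - lam| ≤ |p t| + |lam| := abs_sub _ _
      have h3 := hpB t ht
      have h4 := abs_nonneg (w t)
      have h5 := abs_nonneg (derivWithin w (Set.Icc 0 1) t)
      have h6 := abs_nonneg (p t - lam)
      have h7 := hMq t ht
      have h8 := abs_nonneg (q t - p t)
      have h9 := abs_nonneg (yq t)
      nlinarith
    · exact continuous_const.mul (hq.sub hp).abs
    · exact fun t => mul_nonneg (by nlinarith) (abs_nonneg _)
    · exact hKc
    · exact hw0
    · exact le_rfl
  intro x hx
  have hb := hwb x hx
  rw [intervalIntegral.integral_const_mul] at hb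
  have h5 := abs_nonneg (derivWithin w (Set.Icc 0 1) x)
  have : |w x| ≤ Real.exp (2 * Kc) * (M * ∫ t in (0:ℝ)..1, |q t - p t|) := by linarith
  calc |yq x - yp x| = |w x| := rfl
    _ ≤ M * (M * ∫ t in (0:ℝ)..1, |q t - p t|) := by rw [hMdef] at *; exact this
    _ = M * M * ∫ t in (0:ℝ)..1, |q t - p t| := by ring
end

section
/- Fix λ ∈ ℝ and B ≥ 0. There exists a constant C ≥ 0, depending only on λ and B, with the following property: for all continuous functions p, q : ℝ → ℝ with sup_{x∈[0,1]} |p(x)| ≤ B and sup_{x∈[0,1]} |q(x)| ≤ B, let y_p, y_q and z_p be twice continuously differentiable functions on [0,1] with −y_p'' + p·y_p = λ·y_p, −y_q'' + q·y_q = λ·y_q, −z_p'' + p·z_p = λ·z_p, with y_p(0) = y_q(0) = 0, y_p'(0) = y_q'(0) = 1, z_p(0) = 1, z_p'(0) = 0, and define the linearization w(x) = ∫₀ˣ y_p(t)·( z_p(t)·y_p(x) − z_p(x)·y_p(t) )·( q(t) − p(t) ) dt. Then the linearization is second-order accurate: for every x ∈ [0,1], | y_q(x) − y_p(x) − w(x)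 | ≤ C·( ∫₀¹ |q(t) − p(t)| dt )². -/
open Set Real MeasureTheory intervalIntegral

section LinearizationHelpers

private lemma rderiv01 {f g : ℝ → ℝ} (h : ∀ x ∈ Icc (0:ℝ) 1, HasDerivWithinAt f (g x) (Icc 0 1) x)
    {x : ℝ} (hx : x ∈ Ico (0:ℝ) 1) : HasDerivWithinAt f (g x) (Ici x) x := by
  have hmem : Icc (0:ℝ) 1 ∈ nhdsWithin x (Ici x) :=
    mem_nhdsWithin.mpr ⟨Iio 1, isOpen_Iio, hx.2,
      fun y hy => ⟨le_trans hx.1 hy.2, le_of_lt hy.1⟩⟩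
  exact (h x ⟨hx.1, hx.2.le⟩).mono_of_mem_nhdsWithin hmem

private lemma prim_rderiv {h : ℝ → ℝ} (hc : ContinuousOn h (Icc 0 1))
    {x : ℝ} (hx : x ∈ Ico (0:ℝ) 1) :
    HasDerivWithinAt (fun u => ∫ t in (0:ℝ)..u, h t) (h x) (Ici x) x := by
  have hxm : x ∈ Icc (0:ℝ) 1 := ⟨hx.1, hx.2.le⟩
  have hint : IntervalIntegrable h volume 0 x :=
    (hc.mono (Icc_subset_Icc le_rfl hx.2.le)).intervalIntegrable_of_Icc hx.1
  have hIoc : Ioc x 1 ∈ nhdsWithin x (Ioi x) :=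
    mem_nhdsWithin.mpr ⟨Iio 1, isOpen_Iio, hx.2, fun y hy => ⟨hy.2, le_of_lt hy.1⟩⟩
  have hmeas : StronglyMeasurableAtFilter h (nhdsWithin x (Ioi x)) volume :=
    ⟨Ioc x 1, hIoc, (hc.mono (fun y hy => ⟨le_trans hx.1 hy.1.le, hy.2⟩)).aestronglyMeasurable
      measurableSet_Ioc⟩
  have hcw : ContinuousWithinAt h (Ioi x) x := by
    have : Icc (0:ℝ) 1 ∈ nhdsWithin x (Ioi x) :=
      mem_nhdsWithin.mpr ⟨Iio 1, isOpen_Iio, hx.2,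
        fun y hy => ⟨le_trans hx.1 hy.2.le, le_of_lt hy.1⟩⟩
    exact (hc x hxm).mono_of_mem_nhdsWithin this
  exact intervalIntegral.integral_hasDerivWithinAt_right hint hmeas hcw

private lemma prim_cont {h : ℝ → ℝ} (hc : ContinuousOn h (Icc 0 1)) :
    ContinuousOn (fun u => ∫ t in (0:ℝ)..u, h t) (Icc 0 1) := by
  have := intervalIntegral.continuousOn_primitive_interval
    (f := h) (μ := volume) (a := 0) (b := 1) ?_
  · simpa [uIcc_of_le (by norm_num : (0:ℝ) ≤ 1)] using this
  · rw [uIcc_of_le (by norm_num : (0:ℝ) ≤ 1)]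
    exact hc.integrableOn_Icc

private lemma pair_gronwall {v v1 φ : ℝ → ℝ} {K : ℝ} (hK : 1 ≤ K)
    (hcv : ContinuousOn v (Icc 0 1)) (hcv1 : ContinuousOn v1 (Icc 0 1))
    (hd : ∀ x ∈ Ico (0:ℝ) 1, HasDerivWithinAt v (v1 x) (Ici x) x)
    (hd1 : ∀ x ∈ Ico (0:ℝ) 1, HasDerivWithinAt v1 (φ x) (Ici x) x)
    (hφ : ∀ x ∈ Ico (0:ℝ) 1, |φ x| ≤ K * max |v x| |v1 x|) :
    ∀ x ∈ Icc (0:ℝ) 1, max |v x| |v1 x| ≤ max |v 0| |v1 0| * Real.exp K := by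
  set f : ℝ → ℝ × ℝ := fun x => (v x, v1 x) with hf
  have hfc : ContinuousOn f (Icc 0 1) := hcv.prodMk hcv1
  have hfd : ∀ x ∈ Ico (0:ℝ) 1,
      HasDerivWithinAt f ((v1 x, φ x)) (Ici x) x := fun x hx => (hd x hx).prodMk (hd1 x hx)
  have key := norm_le_gronwallBound_of_norm_deriv_right_le (δ := ‖f 0‖) (K := K) (ε := 0)
      (a := 0) (b := 1) hfc hfd le_rfl ?_
  · intro x hx
    have := key x hx
    rw [gronwallBound_ε0] at this
    have h1 : ‖f x‖ = max |v x| |v1 x| := rfl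
    have h2 : ‖f 0‖ = max |v 0| |v1 0| := rfl
    rw [h1, h2] at this
    refine this.trans ?_
    have : Real.exp (K * (x - 0)) ≤ Real.exp K := by
      apply Real.exp_le_exp.mpr
      nlinarith [hx.1, hx.2, hK]
    nlinarith [abs_nonneg (v 0), le_max_left |v 0| |v1 0|, abs_nonneg (v 0),
      Real.exp_pos (K * (x - 0)), le_trans (abs_nonneg (v 0)) (le_max_left |v 0| |v1 0|)]
  · intro x hx
    have h1 : ‖((v1 x, φ x) : ℝ × ℝ)‖ = max |v1 x| |φ x| := rfl
    have h2 : ‖f x‖ = max |v x| |v1 x| := rfl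
    rw [h1, h2]
    have hm : (0:ℝ) ≤ max |v x| |v1 x| := le_trans (abs_nonneg _) (le_max_left _ _)
    have : |v1 x| ≤ K * max |v x| |v1 x| := by
      nlinarith [le_max_right |v x| |v1 x|]
    simp only [add_zero]
    exact max_le this (hφ x hx)

/-- Variation-of-constants representation on `[0,1]`. -/
private lemma representation
    (lam K : ℝ) (hK : 1 ≤ K) (p : ℝ → ℝ) (hpK : ∀ x ∈ Icc (0:ℝ) 1, |p x - lam| ≤ K)
    (yp yp1 zp zp1 : ℝ → ℝ)
    (hypc : ContinuousOn yp (Icc 0 1)) (hyp1c : ContinuousOn yp1 (Icc 0 1))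
    (hzpc : ContinuousOn zp (Icc 0 1)) (hzp1c : ContinuousOn zp1 (Icc 0 1))
    (hypd : ∀ x ∈ Icc (0:ℝ) 1, HasDerivWithinAt yp (yp1 x) (Icc 0 1) x)
    (hyp1d : ∀ x ∈ Icc (0:ℝ) 1, HasDerivWithinAt yp1 ((p x - lam) * yp x) (Icc 0 1) x)
    (hzpd : ∀ x ∈ Icc (0:ℝ) 1, HasDerivWithinAt zp (zp1 x) (Icc 0 1) x)
    (hzp1d : ∀ x ∈ Icc (0:ℝ) 1, HasDerivWithinAt zp1 ((p x - lam) * zp x) (Icc 0 1) x)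
    (hW : ∀ x ∈ Icc (0:ℝ) 1, zp x * yp1 x - zp1 x * yp x = 1)
    (f : ℝ → ℝ) (hfc : ContinuousOn f (Icc 0 1))
    (v v1 : ℝ → ℝ)
    (hvc : ContinuousOn v (Icc 0 1)) (hv1c : ContinuousOn v1 (Icc 0 1))
    (hvd : ∀ x ∈ Icc (0:ℝ) 1, HasDerivWithinAt v (v1 x) (Icc 0 1) x)
    (hv1d : ∀ x ∈ Icc (0:ℝ) 1, HasDerivWithinAt v1 ((p x - lam) * v x + f x) (Icc 0 1) x)
    (hv0 : v 0 = 0) (hv10 : v1 0 = 0) :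
    ∀ x ∈ Icc (0:ℝ) 1,
      v x = yp x * (∫ t in (0:ℝ)..x, zp t * f t) - zp x * (∫ t in (0:ℝ)..x, yp t * f t) := by
  set A : ℝ → ℝ := fun x => ∫ t in (0:ℝ)..x, zp t * f t with hA
  set Bi : ℝ → ℝ := fun x => ∫ t in (0:ℝ)..x, yp t * f t with hBi
  have hAc : ContinuousOn A (Icc 0 1) := prim_cont (hzpc.mul hfc)
  have hBc : ContinuousOn Bi (Icc 0 1) := prim_cont (hypc.mul hfc)
  have hArd : ∀ x ∈ Ico (0:ℝ) 1, HasDerivWithinAt A (zp x * f x) (Ici x) x :=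
    fun x hx => prim_rderiv (hzpc.mul hfc) hx
  have hBrd : ∀ x ∈ Ico (0:ℝ) 1, HasDerivWithinAt Bi (yp x * f x) (Ici x) x :=
    fun x hx => prim_rderiv (hypc.mul hfc) hx
  set F : ℝ → ℝ := fun x => yp x * A x - zp x * Bi x with hF
  set F1 : ℝ → ℝ := fun x => yp1 x * A x - zp1 x * Bi x with hF1
  have hFc : ContinuousOn F (Icc 0 1) := (hypc.mul hAc).sub (hzpc.mul hBc)
  have hF1c : ContinuousOn F1 (Icc 0 1) := (hyp1c.mul hAc).sub (hzp1c.mul hBc)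
  have hFrd : ∀ x ∈ Ico (0:ℝ) 1, HasDerivWithinAt F (F1 x) (Ici x) x := by
    intro x hx
    have h : HasDerivWithinAt F _ (Ici x) x := ((rderiv01 hypd hx).mul (hArd x hx)).sub ((rderiv01 hzpd hx).mul (hBrd x hx))
    convert h using 1
    simp only [hF1]
    ring
  have hF1rd : ∀ x ∈ Ico (0:ℝ) 1,
      HasDerivWithinAt F1 ((p x - lam) * F x + f x) (Ici x) x := by
    intro x hx
    have h : HasDerivWithinAt F1 _ (Ici x) x := ((rderiv01 hyp1d hx).mul (hArd x hx)).sub ((rderiv01 hzp1d hx).mul (hBrd x hx))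
    convert h using 1
    have hw := hW x ⟨hx.1, hx.2.le⟩
    simp only [hF]
    linear_combination (-f x) * hw
  set D : ℝ → ℝ := fun x => v x - F x with hD
  set D1 : ℝ → ℝ := fun x => v1 x - F1 x with hD1
  have hDc : ContinuousOn D (Icc 0 1) := hvc.sub hFc
  have hD1c : ContinuousOn D1 (Icc 0 1) := hv1c.sub hF1c
  have hDrd : ∀ x ∈ Ico (0:ℝ) 1, HasDerivWithinAt D (D1 x) (Ici x) x :=
    fun x hx => (rderiv01 hvd hx).sub (hFrd x hx)
  have hD1rd : ∀ x ∈ Ico (0:ℝ) 1, HasDerivWithinAt D1 ((p x - lam) * D x) (Ici x) x := by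
    intro x hx
    have h : HasDerivWithinAt D1 _ (Ici x) x := (rderiv01 hv1d hx).sub (hF1rd x hx)
    convert h using 1
    simp only [hD]
    ring
  have hbound : ∀ x ∈ Ico (0:ℝ) 1, |(p x - lam) * D x| ≤ K * max |D x| |D1 x| := by
    intro x hx
    rw [abs_mul]
    have h1 := hpK x ⟨hx.1, hx.2.le⟩
    nlinarith [abs_nonneg (D x), abs_nonneg (p x - lam),
      le_trans (abs_nonneg (D x)) (le_max_left |D x| |D1 x|), le_max_left |D x| |D1 x|]
  have hG := pair_gronwall hK hDc hD1c hDrd hD1rd hbound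
  have hA0 : A 0 = 0 := intervalIntegral.integral_same
  have hB0 : Bi 0 = 0 := intervalIntegral.integral_same
  have hD0 : D 0 = 0 := by simp [hD, hF, hA0, hB0, hv0]
  have hD10 : D1 0 = 0 := by simp [hD1, hF1, hA0, hB0, hv10]
  intro x hx
  have hGx := hG x hx
  rw [hD0, hD10] at hGx
  simp only [abs_zero, max_self, zero_mul] at hGx
  have hDx : |D x| ≤ 0 := le_trans (le_max_left _ _) hGx
  have hDz : D x = 0 := abs_eq_zero.mp (le_antisymm hDx (abs_nonneg _))
  have : v x = F x := by
    simp only [hD] at hDz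
    linarith
  simpa [hF, hA, hBi] using this

/-- All the facts we need about a solution of the ODE. -/
private lemma sol_facts (lam B K : ℝ) (hB : 0 ≤ B) (hK : K = 1 + B + |lam|)
    (r : ℝ → ℝ) (hrB : ∀ x ∈ Icc (0:ℝ) 1, |r x| ≤ B)
    (y : ℝ → ℝ) (hcd : ContDiffOn ℝ 2 y (Icc 0 1))
    (hode : ∀ x ∈ Icc (0:ℝ) 1,
      -(derivWithin (derivWithin y (Icc 0 1)) (Icc 0 1) x) + r x * y x = lam * y x) :
    ContinuousOn y (Icc 0 1) ∧ ContinuousOn (derivWithin y (Icc 0 1)) (Icc 0 1) ∧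
    (∀ x ∈ Icc (0:ℝ) 1, HasDerivWithinAt y (derivWithin y (Icc 0 1) x) (Icc 0 1) x) ∧
    (∀ x ∈ Icc (0:ℝ) 1,
      HasDerivWithinAt (derivWithin y (Icc 0 1)) ((r x - lam) * y x) (Icc 0 1) x) ∧
    (∀ x ∈ Icc (0:ℝ) 1,
      max |y x| |derivWithin y (Icc 0 1) x|
        ≤ max |y 0| |derivWithin y (Icc 0 1) 0| * Real.exp K) := by
  have hS : UniqueDiffOn ℝ (Icc (0:ℝ) 1) := uniqueDiffOn_Icc (by norm_num)
  set y1 := derivWithin y (Icc 0 1) with hy1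
  have hy1cd : ContDiffOn ℝ 1 y1 (Icc 0 1) :=
    hcd.derivWithin hS (by norm_num : (1:WithTop ℕ∞) + 1 ≤ 2)
  have hyc : ContinuousOn y (Icc 0 1) := hcd.continuousOn
  have hy1c : ContinuousOn y1 (Icc 0 1) := hy1cd.continuousOn
  have hyd : ∀ x ∈ Icc (0:ℝ) 1, HasDerivWithinAt y (y1 x) (Icc 0 1) x := fun x hx =>
    ((hcd.differentiableOn (by norm_num : (2:WithTop ℕ∞) ≠ 0)) x hx).hasDerivWithinAt
  have hy1d : ∀ x ∈ Icc (0:ℝ) 1, HasDerivWithinAt y1 ((r x - lam) * y x) (Icc 0 1) x := by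
    intro x hx
    have hd := ((hy1cd.differentiableOn one_ne_zero) x hx).hasDerivWithinAt
    have he : derivWithin y1 (Icc 0 1) x = (r x - lam) * y x := by
      linear_combination -(hode x hx)
    rwa [he] at hd
  refine ⟨hyc, hy1c, hyd, hy1d, ?_⟩
  have hK1 : 1 ≤ K := by rw [hK]; have := abs_nonneg lam; linarith
  exact pair_gronwall hK1 hyc hy1c (fun x hx => rderiv01 hyd hx)
    (fun x hx => rderiv01 hy1d hx) (fun x hx => by
      have hxm : x ∈ Icc (0:ℝ) 1 := ⟨hx.1, hx.2.le⟩
      have h1 : |r x - lam| ≤ B + |lam| := by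
        have h0 := hrB x hxm
        calc |r x - lam| ≤ |r x| + |lam| := abs_sub _ _
        _ ≤ B + |lam| := by linarith
      rw [abs_mul]
      nlinarith [abs_nonneg (r x - lam), hK,
        le_trans (abs_nonneg (y x)) (le_max_left |y x| |y1 x|), le_max_left |y x| |y1 x|])

private lemma integral_bound {h g : ℝ → ℝ} (hgc : Continuous g) (hc : ContinuousOn h (Icc 0 1))
    {c : ℝ} (hc0 : 0 ≤ c) (hb : ∀ t ∈ Icc (0:ℝ) 1, |h t| ≤ c * |g t|)
    {x : ℝ} (hx : x ∈ Icc (0:ℝ) 1) :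
    |∫ t in (0:ℝ)..x, h t| ≤ c * ∫ t in (0:ℝ)..1, |g t| := by
  have hmono : Icc (0:ℝ) x ⊆ Icc 0 1 := Icc_subset_Icc le_rfl hx.2
  have hiah : IntervalIntegrable (fun t => |h t|) volume 0 x :=
    ((hc.mono hmono).abs).intervalIntegrable_of_Icc hx.1
  have hig : IntervalIntegrable (fun t => c * |g t|) volume 0 x :=
    Continuous.intervalIntegrable (by continuity) _ _
  calc |∫ t in (0:ℝ)..x, h t| ≤ ∫ t in (0:ℝ)..x, |h t| :=
        intervalIntegral.abs_integral_le_integral_abs hx.1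
  _ ≤ ∫ t in (0:ℝ)..x, c * |g t| :=
        intervalIntegral.integral_mono_on hx.1 hiah hig (fun t ht => hb t (hmono ht))
  _ ≤ ∫ t in (0:ℝ)..1, c * |g t| := by
      have hsplit := intervalIntegral.integral_add_adjacent_intervals
        (a := (0:ℝ)) (b := x) (c := 1) (f := fun t => c * |g t|) hig
        (Continuous.intervalIntegrable (by continuity) _ _)
      have hnn : 0 ≤ ∫ t in x..(1:ℝ), c * |g t| :=
        intervalIntegral.integral_nonneg hx.2 (fun t _ => by positivity)
      linarith
  _ = c * ∫ t in (0:ℝ)..1, |g t| := intervalIntegral.integral_const_mul c _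

end LinearizationHelpers

/-- **Second-order accuracy of the linearization.** Fix `λ ∈ ℝ` and `B ≥ 0`. There exists
`C ≥ 0`, depending only on `λ` and `B`, such that for all continuous potentials `p, q`
bounded by `B` on `[0,1]`, with `y_p, y_q` the solutions with initial data `(0,1)` for
potentials `p, q`, and `z_p` the solution with initial data `(1,0)` for potential `p`,
the first-order Taylor correction
`w(x) = ∫₀ˣ y_p(t)·(z_p(t)·y_p(x) − z_p(x)·y_p(t))·(q(t) − p(t)) dt` satisfies
`|y_q(x) − y_p(x) − w(x)| ≤ C·(∫₀¹ |q(t) − p(t)| dt)²` for all `x ∈ [0,1]`. -/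
theorem linearization_second_order_accurate
    (lam B : ℝ) (hB : 0 ≤ B) :
    ∃ C : ℝ, 0 ≤ C ∧
      ∀ p q : ℝ → ℝ, Continuous p → Continuous q →
        (∀ x ∈ Set.Icc (0:ℝ) 1, |p x| ≤ B) → (∀ x ∈ Set.Icc (0:ℝ) 1, |q x| ≤ B) →
      ∀ yp yq zp : ℝ → ℝ,
        ContDiffOn ℝ 2 yp (Set.Icc 0 1) → ContDiffOn ℝ 2 yq (Set.Icc 0 1) →
        ContDiffOn ℝ 2 zp (Set.Icc 0 1) →
        (∀ x ∈ Set.Icc (0:ℝ) 1,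
          -(derivWithin (derivWithin yp (Set.Icc 0 1)) (Set.Icc 0 1) x) + p x * yp x
            = lam * yp x) →
        (∀ x ∈ Set.Icc (0:ℝ) 1,
          -(derivWithin (derivWithin yq (Set.Icc 0 1)) (Set.Icc 0 1) x) + q x * yq x
            = lam * yq x) →
        (∀ x ∈ Set.Icc (0:ℝ) 1,
          -(derivWithin (derivWithin zp (Set.Icc 0 1)) (Set.Icc 0 1) x) + p x * zp x
            = lam * zp x) →
        yp 0 = 0 → yq 0 = 0 → zp 0 = 1 →
        derivWithin yp (Set.Icc 0 1) 0 = 1 → derivWithin yq (Set.Icc 0 1) 0 = 1 →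
        derivWithin zp (Set.Icc 0 1) 0 = 0 →
        ∀ x ∈ Set.Icc (0:ℝ) 1,
          |yq x - yp x - ∫ t in (0:ℝ)..x, yp t * (zp t * yp x - zp x * yp t) * (q t - p t)|
            ≤ C * (∫ t in (0:ℝ)..1, |q t - p t|) ^ 2 := by
  set K : ℝ := 1 + B + |lam| with hKdef
  have habs := abs_nonneg lam
  have hK1 : 1 ≤ K := by rw [hKdef]; linarith
  set M : ℝ := Real.exp K with hMdef
  have hM1 : 1 ≤ M := Real.one_le_exp (by linarith)
  have hM0 : 0 ≤ M := by linarith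
  refine ⟨4 * M ^ 5, by positivity, ?_⟩
  intro p q hpc hqc hpB hqB yp yq zp hypcd hyqcd hzpcd hodeP hodeQ hodeZ
    hyp0 hyq0 hzp0 hyp10 hyq10 hzp10
  obtain ⟨hypc, hyp1c, hypd, hyp1d, hypbd⟩ := sol_facts lam B K hB rfl p hpB yp hypcd hodeP
  obtain ⟨hyqc, hyq1c, hyqd, hyq1d, hyqbd⟩ := sol_facts lam B K hB rfl q hqB yq hyqcd hodeQ
  obtain ⟨hzpc, hzp1c, hzpd, hzp1d, hzpbd⟩ := sol_facts lam B K hB rfl p hpB zp hzpcd hodeZ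
  set yp1 := derivWithin yp (Set.Icc (0:ℝ) 1) with hyp1def
  set yq1 := derivWithin yq (Set.Icc (0:ℝ) 1) with hyq1def
  set zp1 := derivWithin zp (Set.Icc (0:ℝ) 1) with hzp1def
  -- uniform bounds on solutions
  have hypM : ∀ x ∈ Icc (0:ℝ) 1, |yp x| ≤ M ∧ |yp1 x| ≤ M := by
    intro x hx
    have := hypbd x hx
    rw [hyp0, hyp10] at this
    simp only [abs_zero, abs_one] at this
    rw [max_eq_right (by norm_num : (0:ℝ) ≤ 1), one_mul] at this
    exact ⟨le_trans (le_max_left _ _) this, le_trans (le_max_right _ _) this⟩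
  have hyqM : ∀ x ∈ Icc (0:ℝ) 1, |yq x| ≤ M ∧ |yq1 x| ≤ M := by
    intro x hx
    have := hyqbd x hx
    rw [hyq0, hyq10] at this
    simp only [abs_zero, abs_one] at this
    rw [max_eq_right (by norm_num : (0:ℝ) ≤ 1), one_mul] at this
    exact ⟨le_trans (le_max_left _ _) this, le_trans (le_max_right _ _) this⟩
  have hzpM : ∀ x ∈ Icc (0:ℝ) 1, |zp x| ≤ M ∧ |zp1 x| ≤ M := by
    intro x hx
    have := hzpbd x hx
    rw [hzp0, hzp10] at this
    simp only [abs_zero, abs_one] at this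
    rw [max_eq_left (by norm_num : (0:ℝ) ≤ 1), one_mul] at this
    exact ⟨le_trans (le_max_left _ _) this, le_trans (le_max_right _ _) this⟩
  -- the Wronskian is identically 1
  have hW : ∀ x ∈ Icc (0:ℝ) 1, zp x * yp1 x - zp1 x * yp x = 1 := by
    have hWc : ContinuousOn (fun x => zp x * yp1 x - zp1 x * yp x) (Icc 0 1) :=
      (hzpc.mul hyp1c).sub (hzp1c.mul hypc)
    have hWd : ∀ x ∈ Ico (0:ℝ) 1,
        HasDerivWithinAt (fun x => zp x * yp1 x - zp1 x * yp x) 0 (Ici x) x := by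
      intro x hx
      have h : HasDerivWithinAt (fun x => zp x * yp1 x - zp1 x * yp x) _ (Ici x) x :=
        ((rderiv01 hzpd hx).mul (rderiv01 hyp1d hx)).sub
        ((rderiv01 hzp1d hx).mul (rderiv01 hypd hx))
      convert h using 1
      ring
    intro x hx
    have := constant_of_has_deriv_right_zero hWc hWd x hx
    rw [this, hzp0, hyp0, hyp10, hzp10]
    ring
  -- the difference u and its derivative
  set g : ℝ → ℝ := fun t => q t - p t with hgdef
  have hgc : Continuous g := hqc.sub hpc
  set u : ℝ → ℝ := fun x => yq x - yp x with hudef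
  set u1 : ℝ → ℝ := fun x => yq1 x - yp1 x with hu1def
  have huc : ContinuousOn u (Icc 0 1) := hyqc.sub hypc
  have hu1c : ContinuousOn u1 (Icc 0 1) := hyq1c.sub hyp1c
  have hud : ∀ x ∈ Icc (0:ℝ) 1, HasDerivWithinAt u (u1 x) (Icc 0 1) x :=
    fun x hx => (hyqd x hx).sub (hypd x hx)
  have hu1d : ∀ x ∈ Icc (0:ℝ) 1,
      HasDerivWithinAt u1 ((p x - lam) * u x + g x * yq x) (Icc 0 1) x := by
    intro x hx
    have h : HasDerivWithinAt u1 _ (Icc 0 1) x := (hyq1d x hx).sub (hyp1d x hx)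
    convert h using 1
    simp only [hudef, hgdef]
    ring
  have hpK : ∀ x ∈ Icc (0:ℝ) 1, |p x - lam| ≤ K := by
    intro x hx
    have h0 := hpB x hx
    calc |p x - lam| ≤ |p x| + |lam| := abs_sub _ _
    _ ≤ K := by rw [hKdef]; linarith
  have hfc : ContinuousOn (fun t => g t * yq t) (Icc 0 1) := hgc.continuousOn.mul hyqc
  have hrep := representation lam K hK1 p hpK yp yp1 zp zp1 hypc hyp1c hzpc hzp1c
    hypd hyp1d hzpd hzp1d hW (fun t => g t * yq t) hfc u u1 huc hu1c hud hu1d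
    (by simp [hudef, hyp0, hyq0]) (by simp [hu1def, hyp10, hyq10])
  set r : ℝ := ∫ t in (0:ℝ)..1, |g t| with hrdef
  have hr0 : 0 ≤ r := intervalIntegral.integral_nonneg (by norm_num) (fun t _ => abs_nonneg _)
  -- first-order bound on u
  have huM : ∀ x ∈ Icc (0:ℝ) 1, |u x| ≤ 2 * M ^ 3 * r := by
    intro x hx
    have h1 : |∫ t in (0:ℝ)..x, zp t * (g t * yq t)| ≤ M * M * r := by
      refine integral_bound hgc (hzpc.mul hfc) (by positivity) (fun t ht => ?_) hx
      have hz := (hzpM t ht).1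
      have hy := (hyqM t ht).1
      calc |zp t * (g t * yq t)| = |zp t| * |g t| * |yq t| := by
            rw [abs_mul, abs_mul]; ring
      _ ≤ M * |g t| * M := by
            gcongr
      _ = M * M * |g t| := by ring
    have h2 : |∫ t in (0:ℝ)..x, yp t * (g t * yq t)| ≤ M * M * r := by
      refine integral_bound hgc (hypc.mul hfc) (by positivity) (fun t ht => ?_) hx
      have hz := (hypM t ht).1
      have hy := (hyqM t ht).1
      calc |yp t * (g t * yq t)| = |yp t| * |g t| * |yq t| := by
            rw [abs_mul, abs_mul]; ring
      _ ≤ M * |g t| * M := by gcongr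
      _ = M * M * |g t| := by ring
    have hrx := hrep x hx
    rw [hrx]
    have hyx := (hypM x hx).1
    have hzx := (hzpM x hx).1
    calc |yp x * (∫ t in (0:ℝ)..x, zp t * (g t * yq t))
            - zp x * (∫ t in (0:ℝ)..x, yp t * (g t * yq t))|
        ≤ |yp x * (∫ t in (0:ℝ)..x, zp t * (g t * yq t))|
            + |zp x * (∫ t in (0:ℝ)..x, yp t * (g t * yq t))| := abs_sub _ _
    _ = |yp x| * |∫ t in (0:ℝ)..x, zp t * (g t * yq t)|
            + |zp x| * |∫ t in (0:ℝ)..x, yp t * (g t * yq t)| := by rw [abs_mul, abs_mul]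
    _ ≤ M * (M * M * r) + M * (M * M * r) := by
          refine add_le_add (mul_le_mul hyx h1 (abs_nonneg _) hM0)
            (mul_le_mul hzx h2 (abs_nonneg _) hM0)
    _ = 2 * M ^ 3 * r := by ring
  -- now the main estimate
  intro x hx
  have hgeq : ∀ t : ℝ, q t - p t = g t := fun t => rfl
  simp only [hgeq]
  -- integrability generator
  have hci : ∀ h : ℝ → ℝ, ContinuousOn h (Icc 0 1) → IntervalIntegrable h volume 0 x :=
    fun h hc => (hc.mono (Icc_subset_Icc le_rfl hx.2)).intervalIntegrable_of_Icc hx.1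
  have hgco : ContinuousOn g (Icc (0:ℝ) 1) := hgc.continuousOn
  -- splitting identity for the two integrals
  have hsplit : ∀ φ : ℝ → ℝ, ContinuousOn φ (Icc 0 1) →
      (∫ t in (0:ℝ)..x, φ t * (g t * yq t))
        = (∫ t in (0:ℝ)..x, φ t * (g t * yp t)) + ∫ t in (0:ℝ)..x, φ t * (g t * u t) := by
    intro φ hφ
    rw [← intervalIntegral.integral_add (hci (fun t => φ t * (g t * yp t)) (hφ.mul (hgco.mul hypc)))
      (hci (fun t => φ t * (g t * u t)) (hφ.mul (hgco.mul huc)))]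
    apply intervalIntegral.integral_congr
    intro t _
    simp only [hudef]
    ring
  -- rewriting the given linearization integral
  have hwid : (∫ t in (0:ℝ)..x, yp t * (zp t * yp x - zp x * yp t) * g t)
      = yp x * (∫ t in (0:ℝ)..x, zp t * (g t * yp t))
        - zp x * (∫ t in (0:ℝ)..x, yp t * (g t * yp t)) := by
    rw [← intervalIntegral.integral_const_mul, ← intervalIntegral.integral_const_mul,
      ← intervalIntegral.integral_sub
        (hci (fun t => yp x * (zp t * (g t * yp t))) (continuousOn_const.mul (hzpc.mul (hgco.mul hypc))))
        (hci (fun t => zp x * (yp t * (g t * yp t))) (continuousOn_const.mul (hypc.mul (hgco.mul hypc))))]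
    apply intervalIntegral.integral_congr
    intro t _
    ring
  have h1 := hsplit zp hzpc
  have h2 := hsplit yp hypc
  have h3 := hrep x hx
  have key : yq x - yp x - (∫ t in (0:ℝ)..x, yp t * (zp t * yp x - zp x * yp t) * g t)
      = yp x * (∫ t in (0:ℝ)..x, zp t * (g t * u t))
        - zp x * (∫ t in (0:ℝ)..x, yp t * (g t * u t)) := by
    have hux : u x = yq x - yp x := rfl
    rw [← hux, hwid]
    linear_combination h3 + yp x * h1 - zp x * h2
  rw [key]
  -- final estimate
  have hI1 : |∫ t in (0:ℝ)..x, zp t * (g t * u t)| ≤ M * (2 * M ^ 3 * r) * r := by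
    refine integral_bound hgc (hzpc.mul (hgco.mul huc)) (by positivity) (fun t ht => ?_) hx
    have hz := (hzpM t ht).1
    have hu' := huM t ht
    calc |zp t * (g t * u t)| = |zp t| * |g t| * |u t| := by rw [abs_mul, abs_mul]; ring
    _ ≤ M * |g t| * (2 * M ^ 3 * r) := by gcongr
    _ = M * (2 * M ^ 3 * r) * |g t| := by ring
  have hI2 : |∫ t in (0:ℝ)..x, yp t * (g t * u t)| ≤ M * (2 * M ^ 3 * r) * r := by
    refine integral_bound hgc (hypc.mul (hgco.mul huc)) (by positivity) (fun t ht => ?_) hx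
    have hz := (hypM t ht).1
    have hu' := huM t ht
    calc |yp t * (g t * u t)| = |yp t| * |g t| * |u t| := by rw [abs_mul, abs_mul]; ring
    _ ≤ M * |g t| * (2 * M ^ 3 * r) := by gcongr
    _ = M * (2 * M ^ 3 * r) * |g t| := by ring
  have hyx := (hypM x hx).1
  have hzx := (hzpM x hx).1
  calc |yp x * (∫ t in (0:ℝ)..x, zp t * (g t * u t))
          - zp x * (∫ t in (0:ℝ)..x, yp t * (g t * u t))|
      ≤ |yp x * (∫ t in (0:ℝ)..x, zp t * (g t * u t))|
          + |zp x * (∫ t in (0:ℝ)..x, yp t * (g t * u t))| := abs_sub _ _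
  _ = |yp x| * |∫ t in (0:ℝ)..x, zp t * (g t * u t)|
          + |zp x| * |∫ t in (0:ℝ)..x, yp t * (g t * u t)| := by rw [abs_mul, abs_mul]
  _ ≤ M * (M * (2 * M ^ 3 * r) * r) + M * (M * (2 * M ^ 3 * r) * r) := by
        refine add_le_add (mul_le_mul hyx hI1 (abs_nonneg _) hM0)
          (mul_le_mul hzx hI2 (abs_nonneg _) hM0)
  _ = 4 * M ^ 5 * r ^ 2 := by ring
end
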